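/- arXiv:1502.01862 — 9 statements merged into one kernel-verified Lean document; each statement's English description precedes it below -/
import Mathlib

section
/- If n is odd and 3 ≤ n ≤ 2g−3, then I_Mac is generated, as an ideal of E, by the binomial(2g, n+1) Macdonald relations of weight n+1 with q = 0. -/
noncomputable section

open Polynomial

/-- The free graded-commutative ring `E = Λ_ℤ⟨x₁,…,x_g,x'₁,…,x'_g⟩ ⊗ ℤ[y]`,
realized as the exterior algebra over `ℤ[y]` on a free module of rank `2g`. -/
abbrev E (g : ℕ) : Type :=
  ExteriorAlgebra (Polynomial ℤ) ((Fin g ⊕ Fin g) → Polynomial ℤ)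

/-- The degree-one generator `x_i`. -/
def x (g : ℕ) (i : Fin g) : E g :=
  ExteriorAlgebra.ι (Polynomial ℤ) (Pi.single (Sum.inl i) 1)

/-- The degree-one generator `x'_i`. -/
def x' (g : ℕ) (i : Fin g) : E g :=
  ExteriorAlgebra.ι (Polynomial ℤ) (Pi.single (Sum.inr i) 1)

/-- The degree-two polynomial generator `y`. -/
def y (g : ℕ) : E g :=
  algebraMap (Polynomial ℤ) (E g) Polynomial.X

/-- The Macdonald relation `x_{i₁}⋯x_{i_a}·x'_{j₁}⋯x'_{j_b}·(y−x_{k₁}x'_{k₁})⋯(y−x_{k_c}x'_{k_c})·y^q`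
associated to lists of indices `I, J, K` and `q : ℕ`. -/
def macRel (g : ℕ) (I J K : List (Fin g)) (q : ℕ) : E g :=
  (I.map (x g)).prod * (J.map (x' g)).prod *
    (K.map (fun k => y g - x g k * x' g k)).prod * (y g) ^ q

/-- The two-sided ideal `I_Mac` generated by all Macdonald relations of weight `n+1`. -/
def IMac (g n : ℕ) : TwoSidedIdeal (E g) :=
  TwoSidedIdeal.span {z : E g | ∃ (I J K : List (Fin g)) (q : ℕ),
    (I ++ J ++ K).Nodup ∧ I.length + J.length + 2 * K.length + q = n + 1 ∧
    z = macRel g I J K q}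

/-- The monomial `x_A x'_B y^q`. -/
def emonomial (g : ℕ) (A B : Finset (Fin g)) (q : ℕ) : E g :=
  ((A.sort (· ≤ ·)).map (x g)).prod * ((B.sort (· ≤ ·)).map (x' g)).prod * (y g) ^ q

/-- The degree-`s` homogeneous component `E^s`, the ℤ-span of the monomials of degree `s`. -/
def Ecomp (g s : ℕ) : Submodule ℤ (E g) :=
  Submodule.span ℤ {z : E g | ∃ (A B : Finset (Fin g)) (q : ℕ),
    A.card + B.card + 2 * q = s ∧ z = emonomial g A B q}

/-!
Both `y` and `z_k := x_k x'_k` are central, and `z_k ^ 2 = 0`. A Macdonald relation with `q > 0`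
is therefore a multiple of one with smaller `q`. If some `x_i` occurs, then `x_i (y - z_i) = x_i y`
trades a factor `y` for a new factor `y - z_i` once `x_i` is pulled out to the left; likewise for
`x'_j`. If no degree-one factor occurs, `q` is even because `n` is odd, and
`(y - z_l)(y + z_l) = y²` trades `y^q` for `q / 2` factors `y - z_l` with fresh indices `l`, which
exist because the weight `n + 1` is at most `2g`.
-/

section CentralElements

variable {R : Type*} [Ring R]

theorem mul_mul_eq_of_mem_center {w c t : R} (M : R) (hc : c ∈ Subring.center R)
    (ht : t ∈ Subring.center R) (h : w * c = w * t) : w * M * c = w * M * t := by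
  rw [mul_assoc, Subring.mem_center_iff.1 hc M, ← mul_assoc, h, mul_assoc,
    ← Subring.mem_center_iff.1 ht M, ← mul_assoc]

theorem sub_mul_add_eq_mul_self_of_mem_center {t z : R} (hz : z ∈ Subring.center R)
    (hzz : z * z = 0) : (t - z) * (t + z) = t * t := by
  have htz : Commute t z := Subring.mem_center_iff.1 hz t
  rw [← htz.mul_self_sub_mul_self_eq', hzz, sub_zero]

end CentralElements

theorem List.exists_length_eq_nodup_append {α : Type*} [Fintype α] {K : List α} (hK : K.Nodup)
    {m : ℕ} (hm : K.length + m ≤ Fintype.card α) :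
    ∃ L : List α, L.length = m ∧ (K ++ L).Nodup := by
  classical
  have hcard : m ≤ (Finset.univ \ K.toFinset).card := by
    rw [Finset.card_sdiff_of_subset (Finset.subset_univ _), Finset.card_univ,
      List.toFinset_card_of_nodup hK]
    omega
  obtain ⟨t, hts, rfl⟩ := Finset.exists_subset_card_eq hcard
  refine ⟨t.toList, t.length_toList, List.nodup_append.2 ⟨hK, t.nodup_toList, ?_⟩⟩
  rintro a ha b hb rfl
  simpa [ha] using hts (Finset.mem_toList.1 hb)

namespace ExteriorAlgebra

variable {R M : Type*} [CommRing R] [AddCommGroup M] [Module R M]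

theorem ι_mul_ι_mem_center (u v : M) :
    ι R u * ι R v ∈ Subring.center (ExteriorAlgebra R M) := by
  have anticomm (a b : M) : ι R a * ι R b = -(ι R b * ι R a) :=
    eq_neg_of_add_eq_zero_left (ι_add_mul_swap a b)
  refine Subring.mem_center_iff.2 fun a => ?_
  induction a using ExteriorAlgebra.induction with
  | algebraMap r => exact Algebra.commutes r _
  | ι w => rw [← mul_assoc, anticomm w u, neg_mul, mul_assoc, anticomm w v, mul_neg, neg_neg,
      mul_assoc]
  | mul a b ha hb => rw [mul_assoc, hb, ← mul_assoc, ha, mul_assoc]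
  | add a b ha hb => rw [add_mul, ha, hb, mul_add]

end ExteriorAlgebra

section Macdonald

open ExteriorAlgebra

variable {g : ℕ}

theorem y_mem_center : y g ∈ Subring.center (E g) :=
  Set.algebraMap_mem_center _

theorem x_mul_x'_mem_center (k : Fin g) : x g k * x' g k ∈ Subring.center (E g) :=
  ι_mul_ι_mem_center _ _

theorem prod_y_sub_mem_center (K : List (Fin g)) :
    (K.map fun k => y g - x g k * x' g k).prod ∈ Subring.center (E g) :=
  Subring.list_prod_mem _ fun _ hc => by
    obtain ⟨k, -, rfl⟩ := List.mem_map.1 hc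
    exact sub_mem y_mem_center (x_mul_x'_mem_center k)

theorem x_mul_x'_mul_self (k : Fin g) : x g k * x' g k * (x g k * x' g k) = 0 := by
  rw [mul_assoc, Subring.mem_center_iff.1 (x_mul_x'_mem_center k), mul_assoc, x', ι_sq_zero,
    mul_zero, mul_zero]

theorem x_mul_y_sub (k : Fin g) : x g k * (y g - x g k * x' g k) = x g k * y g := by
  rw [mul_sub, ← mul_assoc, x, ι_sq_zero, zero_mul, sub_zero]

theorem x'_mul_y_sub (k : Fin g) : x' g k * (y g - x g k * x' g k) = x' g k * y g := by
  rw [mul_sub, Subring.mem_center_iff.1 (x_mul_x'_mem_center k), mul_assoc, x', ι_sq_zero,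
    mul_zero, sub_zero]

theorem mul_mul_y_pow_succ {w : E g} (k : Fin g) (hw : w * (y g - x g k * x' g k) = w * y g)
    (N : E g) (q : ℕ) :
    w * N * y g ^ (q + 1) = w * (N * (y g - x g k * x' g k) * y g ^ q) := by
  have hc := sub_mem y_mem_center (x_mul_x'_mem_center k)
  rw [pow_succ, ← mul_assoc, mul_assoc w, ← mul_mul_eq_of_mem_center _ hc y_mem_center hw,
    mul_assoc, mul_assoc, mul_assoc, ← Subring.mem_center_iff.1 hc]

theorem macRel_cons_succ (i : Fin g) (I J K : List (Fin g)) (q : ℕ) :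
    macRel g (i :: I) J K (q + 1) = x g i * macRel g I J (K ++ [i]) q := by
  simp only [macRel, List.map_cons, List.prod_cons, List.map_append, List.prod_append,
    List.map_nil, List.prod_nil, mul_one]
  rw [mul_assoc (x g i), mul_assoc (x g i), mul_mul_y_pow_succ i (x_mul_y_sub i)]
  simp only [mul_assoc]

theorem macRel_nil_cons_succ (j : Fin g) (J K : List (Fin g)) (q : ℕ) :
    macRel g [] (j :: J) K (q + 1) = x' g j * macRel g [] J (K ++ [j]) q := by
  simp only [macRel, List.map_cons, List.prod_cons, List.map_append, List.prod_append,
    List.map_nil, List.prod_nil, mul_one, one_mul]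
  rw [mul_assoc (x' g j), mul_mul_y_pow_succ j (x'_mul_y_sub j)]
  simp only [mul_assoc]

theorem prod_y_sub_mul_prod_y_add (L : List (Fin g)) :
    (L.map fun l => y g - x g l * x' g l).prod * (L.map fun l => y g + x g l * x' g l).prod
      = y g ^ (2 * L.length) := by
  induction L with
  | nil => simp
  | cons l L ih =>
    have hP := Subring.mem_center_iff.1 (prod_y_sub_mem_center L)
    rw [List.map_cons, List.map_cons, List.prod_cons, List.prod_cons, mul_assoc,
      ← mul_assoc _ (y g + _), ← hP, mul_assoc, ih, ← mul_assoc,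
      sub_mul_add_eq_mul_self_of_mem_center (x_mul_x'_mem_center l) (x_mul_x'_mul_self l),
      ← pow_two, ← pow_add, List.length_cons]
    ring_nf

theorem macRel_append_mul_prod (K L : List (Fin g)) :
    macRel g [] [] (K ++ L) 0 * (L.map fun l => y g + x g l * x' g l).prod
      = macRel g [] [] K (2 * L.length) := by
  simp only [macRel, List.map_nil, List.prod_nil, List.map_append, List.prod_append, pow_zero,
    mul_one, one_mul, mul_assoc, prod_y_sub_mul_prod_y_add]

end Macdonald

def IMac₀ (g n : ℕ) : TwoSidedIdeal (E g) :=
  TwoSidedIdeal.span {z : E g | ∃ (I J K : List (Fin g)),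
    (I ++ J ++ K).Nodup ∧ I.length + J.length + 2 * K.length = n + 1 ∧ z = macRel g I J K 0}

theorem macRel_mem_IMac₀ {g n : ℕ} (hodd : Odd n) (hn : n + 1 ≤ 2 * g) (q : ℕ) :
    ∀ {I J K : List (Fin g)}, (I ++ J ++ K).Nodup →
      I.length + J.length + 2 * K.length + q = n + 1 → macRel g I J K q ∈ IMac₀ g n := by
  induction q with
  | zero => exact fun hnd hw => TwoSidedIdeal.subset_span ⟨_, _, _, hnd, hw, rfl⟩
  | succ q ih =>
    intro I J K hnd hw
    rcases I with _ | ⟨i, I⟩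
    · rcases J with _ | ⟨j, J⟩
      · simp only [List.nil_append, List.length_nil, zero_add] at hnd hw
        obtain ⟨t, rfl⟩ := hodd
        obtain ⟨L, hL, hKL⟩ := List.exists_length_eq_nodup_append hnd
          (m := (q + 1) / 2) (by rw [Fintype.card_fin]; omega)
        rw [show q + 1 = 2 * L.length by omega, ← macRel_append_mul_prod]
        refine TwoSidedIdeal.mul_mem_right _ _ _
          (TwoSidedIdeal.subset_span ⟨[], [], K ++ L, ?_, ?_, rfl⟩)
        · simpa using hKL
        · simp only [List.length_nil, List.length_append]
          omega
      · rw [macRel_nil_cons_succ]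
        refine TwoSidedIdeal.mul_mem_left _ _ _ (ih ?_ ?_)
        · rw [← List.append_assoc]
          exact (List.perm_append_singleton _ _).nodup_iff.2 hnd
        · simp only [List.length_nil, List.length_cons, List.length_append] at hw ⊢
          omega
    · rw [macRel_cons_succ]
      refine TwoSidedIdeal.mul_mem_left _ _ _ (ih ?_ ?_)
      · rw [← List.append_assoc]
        exact (List.perm_append_singleton _ _).nodup_iff.2 hnd
      · simp only [List.length_nil, List.length_cons, List.length_append] at hw ⊢
        omega

theorem IMac_generated_by_q_zero_of_odd_general (g n : ℕ) (hodd : Odd n) (h2g : n ≤ 2 * g - 3) :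
    IMac g n = TwoSidedIdeal.span {z : E g | ∃ (I J K : List (Fin g)),
      (I ++ J ++ K).Nodup ∧ I.length + J.length + 2 * K.length = n + 1 ∧
      z = macRel g I J K 0} := by
  have hn : n + 1 ≤ 2 * g := by
    obtain ⟨t, rfl⟩ := hodd
    omega
  refine le_antisymm (TwoSidedIdeal.span_le.2 ?_) (TwoSidedIdeal.span_mono ?_)
  · rintro _ ⟨I, J, K, q, hnd, hw, rfl⟩
    exact macRel_mem_IMac₀ hodd hn q hnd hw
  · rintro _ ⟨I, J, K, hnd, hw, rfl⟩
    exact ⟨I, J, K, 0, hnd, hw, rfl⟩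

/-- If `n` is odd and `3 ≤ n ≤ 2g − 3`, then `I_Mac` is generated by the Macdonald relations
of weight `n+1` with `q = 0`. -/
theorem IMac_generated_by_q_zero_of_odd (g n : ℕ) (hg : 1 ≤ g) (hodd : Odd n)
    (h3 : 3 ≤ n) (h2g : n ≤ 2 * g - 3) :
    IMac g n = TwoSidedIdeal.span {z : E g | ∃ (I J K : List (Fin g)),
      (I ++ J ++ K).Nodup ∧ I.length + J.length + 2 * K.length = n + 1 ∧
      z = macRel g I J K 0} :=
  IMac_generated_by_q_zero_of_odd_general g n hodd h2g
end
end

section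
/- If n is even and 2 ≤ n ≤ 2g−2, then I_Mac is generated, as an ideal of E, by the binomial(2g, n+1) Macdonald relations of weight n+1 with q = 0 together with the single additional element (y − x_1x'_1)(y − x_2x'_2)⋯(y − x_{n/2}x'_{n/2})·y. -/
noncomputable section

open Polynomial

namespace MacAux

variable {g : ℕ}

local notation "ιι" => ExteriorAlgebra.ι (Polynomial ℤ)

lemma ianti (a b : (Fin g ⊕ Fin g) → Polynomial ℤ) :
    (ιι a : E g) * ιι b = -(ιι b * ιι a) := by
  have h := ExteriorAlgebra.ι_sq_zero (R := Polynomial ℤ) (a + b)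
  rw [map_add, add_mul, mul_add, mul_add, ExteriorAlgebra.ι_sq_zero,
    ExteriorAlgebra.ι_sq_zero] at h
  rw [eq_neg_iff_add_eq_zero]
  simpa using h

/-- A product of two `ι`'s is central. -/
lemma pair_central (a b : (Fin g ⊕ Fin g) → Polynomial ℤ) (z : E g) :
    Commute ((ιι a : E g) * ιι b) z := by
  induction z using ExteriorAlgebra.induction with
  | algebraMap r => exact (Algebra.commutes r _).symm
  | ι v =>
      show _ = _
      calc (ιι a * ιι b) * ιι v = ιι a * (ιι b * ιι v) := mul_assoc _ _ _
        _ = ιι a * -(ιι v * ιι b) := by rw [ianti]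
        _ = -(ιι a * ιι v) * ιι b := by rw [mul_neg, neg_mul, mul_assoc]
        _ = (ιι v * ιι a) * ιι b := by rw [ianti a v, neg_neg]
        _ = ιι v * (ιι a * ιι b) := mul_assoc _ _ _
  | mul p q hp hq => exact hp.mul_right hq
  | add p q hp hq => exact hp.add_right hq

lemma y_central (z : E g) : Commute (y g) z := by
  show y g * z = z * y g
  rw [y]; exact Algebra.commutes _ _

lemma xx'_central (i : Fin g) (z : E g) : Commute (x g i * x' g i) z :=
  pair_central _ _ z

lemma w_central (k : Fin g) (z : E g) : Commute (y g - x g k * x' g k) z :=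
  (y_central z).sub_left (xx'_central k z)

lemma P_central (K : List (Fin g)) (z : E g) :
    Commute ((K.map (fun k => y g - x g k * x' g k)).prod) z := by
  apply Commute.list_prod_left
  intro a ha
  obtain ⟨k, _, rfl⟩ := List.mem_map.1 ha
  exact w_central k z

/-- pull a central element out of the middle -/
lemma cent_pull {c : E g} (hc : ∀ z : E g, Commute c z) (a b : E g) :
    a * (c * b) = c * (a * b) := by
  rw [← mul_assoc, ← (hc a).eq, mul_assoc]

lemma macRel_assoc (I J K : List (Fin g)) (q : ℕ) :
    macRel g I J K q = (I.map (x g)).prod * ((J.map (x' g)).prod *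
      ((K.map (fun k => y g - x g k * x' g k)).prod * (y g) ^ q)) := by
  simp [macRel, mul_assoc]

/-- E7 -/
lemma macRel_succ (I J K : List (Fin g)) (q : ℕ) :
    macRel g I J K (q + 1) = y g * macRel g I J K q := by
  rw [macRel_assoc, macRel_assoc, pow_succ']
  rw [cent_pull y_central, cent_pull y_central, cent_pull y_central]

/-- E3 -/
lemma macRel_split (I J K : List (Fin g)) (m : Fin g) (q : ℕ) :
    macRel g I J K (q + 1) =
      macRel g I J (m :: K) q + (x g m * x' g m) * macRel g I J K q := by
  rw [macRel_succ, macRel_assoc, macRel_assoc, List.map_cons, List.prod_cons]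
  rw [mul_assoc (y g - x g m * x' g m)]
  rw [cent_pull (w_central m), cent_pull (w_central m)]
  rw [← add_mul, sub_add_cancel]

/-- E5 -/
lemma macRel_cons_x (i : Fin g) (I J K : List (Fin g)) (q : ℕ) :
    macRel g (i :: I) J K q = x g i * macRel g I J K q := by
  rw [macRel_assoc, macRel_assoc, List.map_cons, List.prod_cons, mul_assoc]

/-- E5' -/
lemma macRel_cons_x' (j : Fin g) (J K : List (Fin g)) (q : ℕ) :
    macRel g [] (j :: J) K q = x' g j * macRel g [] J K q := by
  rw [macRel_assoc, macRel_assoc, List.map_cons, List.prod_cons]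
  simp only [List.map_nil, List.prod_nil, one_mul, mul_assoc]

/-- E1 -/
lemma macRel_x_absorb (i : Fin g) (I J K : List (Fin g)) (q : ℕ) :
    macRel g (i :: I) J K (q + 1) = x g i * macRel g I J (i :: K) q := by
  have hz : x g i * (y g - x g i * x' g i) = x g i * y g := by
    rw [mul_sub, ← mul_assoc, x, ExteriorAlgebra.ι_sq_zero, zero_mul, sub_zero]
  have hsplit : macRel g I J (i :: K) q
      = (y g - x g i * x' g i) * macRel g I J K q := by
    rw [macRel_assoc, macRel_assoc, List.map_cons, List.prod_cons,
      mul_assoc (y g - x g i * x' g i), cent_pull (w_central i), cent_pull (w_central i)]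
  rw [hsplit, ← mul_assoc, hz, mul_assoc, ← macRel_succ, macRel_cons_x]

/-- E2 -/
lemma macRel_x'_absorb (j : Fin g) (J K : List (Fin g)) (q : ℕ) :
    macRel g [] (j :: J) K (q + 1) = x' g j * macRel g [] J (j :: K) q := by
  have hz : x' g j * (y g - x g j * x' g j) = x' g j * y g := by
    rw [mul_sub, x, x', ← mul_assoc, ianti, neg_mul, mul_assoc,
      ExteriorAlgebra.ι_sq_zero, mul_zero, neg_zero, sub_zero]
  have hsplit : macRel g [] J (j :: K) q
      = (y g - x g j * x' g j) * macRel g [] J K q := by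
    rw [macRel_assoc, macRel_assoc, List.map_cons, List.prod_cons]
    simp only [List.map_nil, List.prod_nil, one_mul]
    rw [mul_assoc (y g - x g j * x' g j), cent_pull (w_central j)]
  rw [hsplit, ← mul_assoc, hz, mul_assoc, ← macRel_succ, macRel_cons_x']

/-- E4 -/
lemma macRel_xx' (a : Fin g) (K : List (Fin g)) (q : ℕ) :
    (x g a * x' g a) * macRel g [] [] K q = -(x' g a * macRel g [a] [] K q) := by
  rw [macRel_assoc, macRel_assoc]
  simp only [List.map_nil, List.prod_nil, one_mul, List.map_cons, List.prod_cons,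
    List.map_nil, List.prod_nil, mul_one]
  rw [x, x', ianti, neg_mul, mul_assoc]

/-- permutation invariance in `K` -/
lemma macRel_perm {K K' : List (Fin g)} (h : K.Perm K') (I J : List (Fin g)) (q : ℕ) :
    macRel g I J K q = macRel g I J K' q := by
  unfold macRel
  congr 2
  refine List.Perm.prod_eq' (h.map _) ?_
  apply List.pairwise_of_forall_mem_list
  intro a ha b hb
  obtain ⟨k, _, rfl⟩ := List.mem_map.1 ha
  exact w_central k b

/-! ### Membership lemmas -/

/-- The target ideal. -/
def S (g n : ℕ) : TwoSidedIdeal (E g) :=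
  TwoSidedIdeal.span
      (insert (macRel g [] [] ((List.finRange g).take (n / 2)) 1)
        {z : E g | ∃ (I J K : List (Fin g)),
          (I ++ J ++ K).Nodup ∧ I.length + J.length + 2 * K.length = n + 1 ∧
          z = macRel g I J K 0})

variable {n : ℕ}

lemma gen0_mem {I J K : List (Fin g)} (hnd : (I ++ J ++ K).Nodup)
    (hw : I.length + J.length + 2 * K.length = n + 1) :
    macRel g I J K 0 ∈ S g n :=
  TwoSidedIdeal.subset_span (Set.mem_insert_of_mem _ ⟨I, J, K, hnd, hw, rfl⟩)

lemma extra_mem : macRel g [] [] ((List.finRange g).take (n / 2)) 1 ∈ S g n :=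
  TwoSidedIdeal.subset_span (Set.mem_insert _ _)

lemma exists_fresh (K : List (Fin g)) (hnd : K.Nodup) (h : K.length < g) :
    ∃ m : Fin g, m ∉ K := by
  by_contra h'
  push_neg at h'
  have hsub : (Finset.univ : Finset (Fin g)) ⊆ K.toFinset :=
    fun m _ => List.mem_toFinset.2 (h' m)
  have := Finset.card_le_card hsub
  rw [List.toFinset_card_of_nodup hnd, Finset.card_univ, Fintype.card_fin] at this
  omega

/-- L5: the swap lemma. -/
lemma swap_mem (hn2 : 2 * (n / 2) = n) (K : List (Fin g)) (hnd : K.Nodup)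
    (hlen : K.length + 1 = n / 2) (k l : Fin g) (hk : k ∉ K) (hl : l ∉ K) (hkl : k ≠ l) :
    macRel g [] [] (k :: K) 1 - macRel g [] [] (l :: K) 1 ∈ S g n := by
  have ek : macRel g [] [] K 2
      = macRel g [] [] (k :: K) 1 + (x g k * x' g k) * macRel g [] [] K 1 :=
    macRel_split [] [] K k 1
  have el : macRel g [] [] K 2
      = macRel g [] [] (l :: K) 1 + (x g l * x' g l) * macRel g [] [] K 1 :=
    macRel_split [] [] K l 1
  have hk1 := eq_sub_of_add_eq ek.symm
  have hl1 := eq_sub_of_add_eq el.symm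
  have eAk : macRel g [] [] K 1
      = macRel g [] [] (k :: K) 0 + (x g k * x' g k) * macRel g [] [] K 0 :=
    macRel_split [] [] K k 0
  have eAl : macRel g [] [] K 1
      = macRel g [] [] (l :: K) 0 + (x g l * x' g l) * macRel g [] [] K 0 :=
    macRel_split [] [] K l 0
  have c1 : (x g l * x' g l) * macRel g [] [] K 1
      = (x g l * x' g l) * macRel g [] [] (k :: K) 0
        + (x g l * x' g l) * ((x g k * x' g k) * macRel g [] [] K 0) := by
    rw [eAk, mul_add]
  have c2 : (x g k * x' g k) * macRel g [] [] K 1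
      = (x g k * x' g k) * macRel g [] [] (l :: K) 0
        + (x g k * x' g k) * ((x g l * x' g l) * macRel g [] [] K 0) := by
    rw [eAl, mul_add]
  have hdiff : macRel g [] [] (k :: K) 1 - macRel g [] [] (l :: K) 1
      = (x g l * x' g l) * macRel g [] [] (k :: K) 0
        - (x g k * x' g k) * macRel g [] [] (l :: K) 0 := by
    rw [hk1, hl1, sub_sub_sub_cancel_left, c1, c2,
      cent_pull (xx'_central k) (x g l * x' g l) (macRel g [] [] K 0),
      add_sub_add_right_eq_sub]
  rw [hdiff, macRel_xx' l (k :: K) 0, macRel_xx' k (l :: K) 0]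
  refine (S g n).sub_mem ((S g n).neg_mem ?_) ((S g n).neg_mem ?_)
  · refine (S g n).mul_mem_left _ _ (gen0_mem ?_ ?_)
    · simp only [List.append_nil, List.nil_append, List.cons_append, List.nodup_cons,
        List.mem_cons]
      exact ⟨by push_neg; exact ⟨fun h => absurd h.symm hkl, hl⟩, hk, hnd⟩
    · simp only [List.length_cons, List.length_nil]
      omega
  · refine (S g n).mul_mem_left _ _ (gen0_mem ?_ ?_)
    · simp only [List.append_nil, List.nil_append, List.cons_append, List.nodup_cons,
        List.mem_cons]
      exact ⟨by push_neg; exact ⟨hkl, hk⟩, hl, hnd⟩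
    · simp only [List.length_cons, List.length_nil]
      omega

/-- L4: `y*P_K` is in `S` for any nodup `K` of length `n/2`. -/
lemma yP_mem (hn2 : 2 * (n / 2) = n) (hpos : 1 <= n / 2) (hK0len : n / 2 <= g) :
    ∀ (d : Nat) (K : List (Fin g)),
      (K.toFinset \ ((List.finRange g).take (n / 2)).toFinset).card = d ->
      K.Nodup -> K.length = n / 2 -> macRel g [] [] K 1 ∈ S g n := by
  set K0 : List (Fin g) := (List.finRange g).take (n / 2) with hK0
  have hndK0 : K0.Nodup := ((List.finRange g).take_sublist _).nodup (List.nodup_finRange g)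
  have hlenK0 : K0.length = n / 2 := by
    rw [hK0, List.length_take, List.length_finRange]
    omega
  intro d
  induction d with
  | zero =>
      intro K hcard hnd hlen
      have hsub : K.toFinset ⊆ K0.toFinset := by
        intro a ha
        by_contra hna
        have hmem : a ∈ K.toFinset \ K0.toFinset := Finset.mem_sdiff.2 ⟨ha, hna⟩
        rw [Finset.card_eq_zero] at hcard
        simp [hcard] at hmem
      have hfeq : K.toFinset = K0.toFinset := by
        apply Finset.eq_of_subset_of_card_le hsub
        rw [List.toFinset_card_of_nodup hnd, List.toFinset_card_of_nodup hndK0, hlen, hlenK0]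
      have hperm : K.Perm K0 := List.perm_of_nodup_nodup_toFinset_eq hnd hndK0 hfeq
      rw [macRel_perm hperm]
      exact extra_mem
  | succ d ih =>
      intro K hcard hnd hlen
      have hex : ∃ k, k ∈ K.toFinset \ K0.toFinset := by
        apply Finset.card_pos.1
        omega
      obtain ⟨k, hkmem⟩ := hex
      obtain ⟨hkK, hkK0⟩ := Finset.mem_sdiff.1 hkmem
      have hkK' : k ∈ K := List.mem_toFinset.1 hkK
      have hexl : ∃ l, l ∈ K0.toFinset \ K.toFinset := by
        by_contra hno
        push_neg at hno
        have hsub : K0.toFinset ⊆ K.toFinset := by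
          intro a ha
          by_contra hna
          exact hno a (Finset.mem_sdiff.2 ⟨ha, hna⟩)
        have heq : K0.toFinset = K.toFinset := by
          apply Finset.eq_of_subset_of_card_le hsub
          rw [List.toFinset_card_of_nodup hnd, List.toFinset_card_of_nodup hndK0, hlen, hlenK0]
        rw [<- heq] at hkK
        exact hkK0 hkK
      obtain ⟨l, hlmem⟩ := hexl
      obtain ⟨hlK0, hlK⟩ := Finset.mem_sdiff.1 hlmem
      have hlK' : l ∉ K := fun h => hlK (List.mem_toFinset.2 h)
      have hkl : k ≠ l := fun h => hkK0 (h ▸ hlK0)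
      set K1 : List (Fin g) := K.erase k with hK1
      have hpermK : K.Perm (k :: K1) := List.perm_cons_erase hkK'
      have hndK1 : K1.Nodup := hnd.erase k
      have hkK1 : k ∉ K1 := hnd.not_mem_erase
      have hlK1 : l ∉ K1 := fun h => hlK' (List.mem_of_mem_erase h)
      have hlenK1 : K1.length + 1 = n / 2 := by
        have hKpos : 0 < K.length := List.length_pos_of_mem hkK'
        rw [hK1, List.length_erase_of_mem hkK']
        omega
      have hmem1 : macRel g [] [] (k :: K1) 1 - macRel g [] [] (l :: K1) 1 ∈ S g n :=
        swap_mem hn2 K1 hndK1 hlenK1 k l hkK1 hlK1 hkl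
      have hfin1 : K1.toFinset = K.toFinset.erase k := by
        ext a
        simp only [List.mem_toFinset, Finset.mem_erase, hK1, hnd.mem_erase_iff]
      have hmem2 : macRel g [] [] (l :: K1) 1 ∈ S g n := by
        refine ih (l :: K1) ?_ (List.nodup_cons.2 ⟨hlK1, hndK1⟩) (by simp; omega)
        have hlcons : (l :: K1).toFinset = insert l K1.toFinset := by
          simp [List.toFinset_cons]
        rw [hlcons, Finset.insert_sdiff_of_mem _ hlK0, hfin1, Finset.erase_sdiff_comm,
          Finset.card_erase_of_mem hkmem, hcard]
        omega
      have hrw : macRel g [] [] K 1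
          = (macRel g [] [] (k :: K1) 1 - macRel g [] [] (l :: K1) 1)
            + macRel g [] [] (l :: K1) 1 := by
        rw [macRel_perm hpermK]
        abel
      rw [hrw]
      exact (S g n).add_mem hmem1 hmem2

/-- Main lemma: every Macdonald relation of weight `n+1` lies in `S`. -/
lemma main_mem (hg : 1 <= g) (hn2 : 2 * (n / 2) = n) (hpos : 1 <= n / 2)
    (h2g : n <= 2 * g - 2) :
    ∀ (q : Nat) (I J K : List (Fin g)), (I ++ J ++ K).Nodup ->
      I.length + J.length + 2 * K.length + q = n + 1 -> macRel g I J K q ∈ S g n := by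
  intro q
  induction q using Nat.strong_induction_on with
  | _ q ih =>
    intro I J K hnd hw
    match q with
    | 0 => exact gen0_mem hnd hw
    | (q' + 1) =>
      match I with
      | (i :: I') =>
          rw [macRel_x_absorb]
          have hnd' : (I' ++ J ++ (i :: K)).Nodup := by
            have h0 : ((i :: I') ++ J ++ K) = i :: (I' ++ J ++ K) := by simp
            rw [h0] at hnd
            exact List.perm_middle.symm.nodup hnd
          refine (S g n).mul_mem_left _ _ (ih q' (Nat.lt_succ_self _) I' J (i :: K) hnd' ?_)
          simp only [List.length_cons] at hw ⊢
          omega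
      | [] =>
        match J with
        | (j :: J') =>
            rw [macRel_x'_absorb]
            have hnd' : ([] ++ J' ++ (j :: K)).Nodup := by
              simp only [List.nil_append] at hnd ⊢
              exact List.perm_middle.symm.nodup hnd
            refine (S g n).mul_mem_left _ _ (ih q' (Nat.lt_succ_self _) [] J' (j :: K) hnd' ?_)
            simp only [List.length_cons, List.length_nil] at hw ⊢
            omega
        | [] =>
            simp only [List.nil_append] at hnd
            simp only [List.length_nil] at hw
            match q' with
            | 0 =>
                have hlen : K.length = n / 2 := by omega
                exact yP_mem hn2 hpos (by omega) _ K rfl hnd hlen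
            | (q'' + 1) =>
                have hKlt : K.length < g := by omega
                obtain ⟨m, hm⟩ := exists_fresh K hnd hKlt
                rw [macRel_split [] [] K m (q'' + 1)]
                refine (S g n).add_mem ?_ ?_
                · rw [macRel_succ]
                  refine (S g n).mul_mem_left _ _
                    (ih q'' (by omega) [] [] (m :: K) ?_ ?_)
                  · simpa using List.nodup_cons.2 ⟨hm, hnd⟩
                  · simp only [List.length_cons, List.length_nil]
                    omega
                · rw [macRel_xx']
                  refine (S g n).neg_mem ((S g n).mul_mem_left _ _
                    (ih (q'' + 1) (by omega) [m] [] K ?_ ?_))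
                  · simpa using List.nodup_cons.2 ⟨hm, hnd⟩
                  · simp only [List.length_cons, List.length_nil]
                    omega

lemma span_le_ideal {R : Type*} [NonUnitalNonAssocRing R] {s : Set R} {I : TwoSidedIdeal R}
    (h : s ⊆ (I : Set R)) : TwoSidedIdeal.span s <= I := by
  intro z hz
  exact TwoSidedIdeal.mem_span_iff.1 hz I h

end MacAux

/-- If `n` is even and `2 ≤ n ≤ 2g − 2`, then `I_Mac` is generated by the Macdonald relations
of weight `n+1` with `q = 0` together with the single extra element
`(y − x₁x'₁)(y − x₂x'₂)⋯(y − x_{n/2}x'_{n/2})·y`. -/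
theorem IMac_generated_by_q_zero_and_extra_of_even (g n : ℕ) (hg : 1 ≤ g) (heven : Even n)
    (h2 : 2 ≤ n) (h2g : n ≤ 2 * g - 2) :
    IMac g n = TwoSidedIdeal.span
      (insert (macRel g [] [] ((List.finRange g).take (n / 2)) 1)
        {z : E g | ∃ (I J K : List (Fin g)),
          (I ++ J ++ K).Nodup ∧ I.length + J.length + 2 * K.length = n + 1 ∧
          z = macRel g I J K 0}) := by
  have hn2 : 2 * (n / 2) = n := by
    obtain ⟨t, rfl⟩ := heven
    omega
  refine le_antisymm ?_ ?_
  · unfold IMac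
    apply MacAux.span_le_ideal
    rintro z ⟨I, J, K, q, hnd, hw, rfl⟩
    show macRel g I J K q ∈ MacAux.S g n
    exact MacAux.main_mem hg hn2 (by omega) h2g q I J K hnd hw
  · apply MacAux.span_le_ideal
    intro z hz
    rcases Set.mem_insert_iff.1 hz with rfl | ⟨I, J, K, hnd, hw, rfl⟩
    · refine TwoSidedIdeal.subset_span
        ⟨[], [], (List.finRange g).take (n / 2), 1, ?_, ?_, rfl⟩
      · simpa using ((List.finRange g).take_sublist _).nodup (List.nodup_finRange g)
      · simp only [List.length_nil, List.length_take, List.length_finRange]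
        omega
    · exact TwoSidedIdeal.subset_span ⟨I, J, K, 0, hnd, by omega, rfl⟩
end
end

section
/- Suppose n is even and 2 ≤ n ≤ 2g−2, and let J ⊆ E be the ideal generated by the Macdonald relations of weight n+1 with q = 0. Then for every nonzero integer m, the element m·(y − x_1x'_1)(y − x_2x'_2)⋯(y − x_{n/2}x'_{n/2})·y does not belong to J; in particular (y − x_1x'_1)⋯(y − x_{n/2}x'_{n/2})·y ∉ J, so this generator cannot be removed from the generating set of I_Mac. -/
noncomputable section

open Polynomial

/-! The augmentation `E → ℤ[y]` killing every `x_i` and `x'_i` kills each Macdonald relation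
with `a + b > 0`, which is the case for every relation of odd weight with `q = 0`. When `n` is
even, it therefore kills the whole ideal `J`, but it sends `m·(y − x₁x'₁)⋯(y − x_{n/2}x'_{n/2})·y`
to `m·y^{n/2+1} ≠ 0`, since each factor `y − x_kx'_k` goes to `y`. -/

open ExteriorAlgebra

theorem ExteriorAlgebra.algebraMapInv_ι {R M : Type*} [CommRing R] [AddCommGroup M] [Module R M]
    (v : M) : algebraMapInv (ι R v) = (0 : R) :=
  lift_ι_apply R _ _ v

theorem map_list_prod_map_eq_zero {ι A B F : Type*} [MonoidWithZero A] [MonoidWithZero B]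
    [FunLike F A B] [MonoidWithZeroHomClass F A B] (f : F) {h : ι → A} (hf : ∀ i, f (h i) = 0)
    {L : List ι} (hL : L ≠ []) : f (L.map h).prod = 0 := by
  obtain ⟨i, hi⟩ := List.exists_mem_of_ne_nil L hL
  rw [map_list_prod, List.map_map]
  exact List.prod_eq_zero (List.mem_map.mpr ⟨i, hi, hf i⟩)

section Augmentation

variable {g : ℕ}

@[simp] theorem algebraMapInv_x (i : Fin g) : algebraMapInv (x g i) = 0 :=
  algebraMapInv_ι _

@[simp] theorem algebraMapInv_x' (i : Fin g) : algebraMapInv (x' g i) = 0 :=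
  algebraMapInv_ι _

@[simp] theorem algebraMapInv_y : algebraMapInv (y g) = X :=
  algebraMap_leftInverse _ X

theorem algebraMapInv_macRel_of_append_ne_nil {I J : List (Fin g)} (hIJ : I ++ J ≠ [])
    (K : List (Fin g)) (q : ℕ) : algebraMapInv (macRel g I J K q) = 0 := by
  have hxI : algebraMapInv (I.map (x g)).prod * algebraMapInv (J.map (x' g)).prod = 0 := by
    by_cases hI : I = []
    · rw [map_list_prod_map_eq_zero _ algebraMapInv_x' (by simpa [hI] using hIJ), mul_zero]
    · rw [map_list_prod_map_eq_zero _ algebraMapInv_x hI, zero_mul]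
  simp only [macRel, map_mul, hxI, zero_mul]

theorem algebraMapInv_macRel_of_odd {I J K : List (Fin g)}
    (hodd : Odd (I.length + J.length + 2 * K.length)) (q : ℕ) :
    algebraMapInv (macRel g I J K q) = 0 := by
  refine algebraMapInv_macRel_of_append_ne_nil (fun hIJ => ?_) K q
  rw [List.append_eq_nil_iff] at hIJ
  simp only [hIJ.1, hIJ.2, List.length_nil, zero_add] at hodd
  exact Nat.not_odd_iff_even.mpr (even_two_mul _) hodd

theorem algebraMapInv_macRel_nil_nil (K : List (Fin g)) (q : ℕ) :
    algebraMapInv (macRel g [] [] K q) = (X : ℤ[X]) ^ (K.length + q) := by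
  have hK : algebraMapInv (K.map fun k => y g - x g k * x' g k).prod = (X : ℤ[X]) ^ K.length := by
    rw [map_list_prod, List.map_map]
    simp [Function.comp_def, List.map_const', List.prod_replicate]
  simp [macRel, hK, pow_add]

end Augmentation

theorem extra_generator_not_in_q_zero_ideal_general (g n : ℕ) (heven : Even n) (m : ℤ) (hm : m ≠ 0) :
    m • macRel g [] [] ((List.finRange g).take (n / 2)) 1 ∉
      TwoSidedIdeal.span {z : E g | ∃ (I J K : List (Fin g)),
        (I ++ J ++ K).Nodup ∧ I.length + J.length + 2 * K.length = n + 1 ∧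
        z = macRel g I J K 0} := by
  intro hmem
  have hker := TwoSidedIdeal.mem_span_iff.mp hmem (TwoSidedIdeal.ker algebraMapInv) <| by
    rintro _ ⟨I, J, K, -, hweight, rfl⟩
    exact (TwoSidedIdeal.mem_ker _).mpr (algebraMapInv_macRel_of_odd (hweight ▸ heven.add_one) 0)
  rw [TwoSidedIdeal.mem_ker, map_zsmul, algebraMapInv_macRel_nil_nil, smul_eq_zero] at hker
  exact hker.elim hm (pow_ne_zero _ X_ne_zero)

/-- For even `2 ≤ n ≤ 2g − 2`, no nonzero integer multiple of
`(y − x₁x'₁)⋯(y − x_{n/2}x'_{n/2})·y` lies in the ideal `J` generated by the Macdonald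
relations of weight `n+1` with `q = 0`; in particular this generator cannot be removed. -/
theorem extra_generator_not_in_q_zero_ideal (g n : ℕ) (hg : 1 ≤ g) (heven : Even n)
    (h2 : 2 ≤ n) (h2g : n ≤ 2 * g - 2) (m : ℤ) (hm : m ≠ 0) :
    m • macRel g [] [] ((List.finRange g).take (n / 2)) 1 ∉
      TwoSidedIdeal.span {z : E g | ∃ (I J K : List (Fin g)),
        (I ++ J ++ K).Nodup ∧ I.length + J.length + 2 * K.length = n + 1 ∧
        z = macRel g I J K 0} :=
  extra_generator_not_in_q_zero_ideal_general g n heven m hm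
end
end

section
/- For every integer q ≥ 0 and all pairwise distinct indices i_1,…,i_a, j_1,…,j_b, k_1,…,k_c ∈ {1,…,g} whose weight satisfies a+b+2c+q ≥ n+1, the Macdonald relation x_{i_1}⋯x_{i_a}·x'_{j_1}⋯x'_{j_b}·(y − x_{k_1}x'_{k_1})⋯(y − x_{k_c}x'_{k_c})·y^q belongs to I_Mac. -/
noncomputable section

open Polynomial

/-! A Macdonald relation of weight `w + 1` is a multiple of one of weight `w`: a leading `x_i` or
`x'_j`, or a trailing `y`, can be split off directly, and when only factors `y - x_k x'_k` remain,
expanding the first one gives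
`(y - x_k x'_k) R = R y - x_k (x'_k R)`,
a difference of two relations of weight `w` (as `y` is central). Inducting on the weight, every
relation of weight at least `n + 1` lies in the ideal generated by those of weight exactly `n + 1`. -/

section MacdonaldRelations

variable {g : ℕ}

lemma macRel_cons_left (i : Fin g) (I J K : List (Fin g)) (q : ℕ) :
    macRel g (i :: I) J K q = x g i * macRel g I J K q := by
  simp [macRel, mul_assoc]

lemma macRel_nil_cons (j : Fin g) (J K : List (Fin g)) (q : ℕ) :
    macRel g [] (j :: J) K q = x' g j * macRel g [] J K q := by
  simp [macRel, mul_assoc]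

lemma macRel_succ (I J K : List (Fin g)) (q : ℕ) :
    macRel g I J K (q + 1) = macRel g I J K q * y g := by
  simp [macRel, pow_succ, mul_assoc]

lemma y_mul_comm (a : E g) : y g * a = a * y g :=
  Algebra.commutes _ _

lemma macRel_nil_nil_cons_zero (k : Fin g) (K : List (Fin g)) :
    macRel g [] [] (k :: K) 0 = macRel g [] [] K 1 - x g k * macRel g [] [k] K 0 := by
  simp only [macRel, List.map_cons, List.prod_cons, List.map_nil, List.prod_nil, pow_zero,
    pow_one, one_mul, mul_one]
  rw [sub_mul, y_mul_comm, mul_assoc]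

variable (g) in
def macRelsOfWeight (w : ℕ) : Set (E g) :=
  {z | ∃ (I J K : List (Fin g)) (q : ℕ),
    (I ++ J ++ K).Nodup ∧ I.length + J.length + 2 * K.length + q = w ∧ z = macRel g I J K q}

lemma IMac_eq_span_macRelsOfWeight (n : ℕ) :
    IMac g n = TwoSidedIdeal.span (macRelsOfWeight g (n + 1)) :=
  rfl

lemma macRel_mem_span_macRelsOfWeight {I J K : List (Fin g)} {q w : ℕ}
    (hnd : (I ++ J ++ K).Nodup) (hw : I.length + J.length + 2 * K.length + q = w) :
    macRel g I J K q ∈ TwoSidedIdeal.span (macRelsOfWeight g w) :=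
  TwoSidedIdeal.subset_span ⟨I, J, K, q, hnd, hw, rfl⟩

theorem macRelsOfWeight_succ_subset_span (w : ℕ) :
    macRelsOfWeight g (w + 1) ⊆ TwoSidedIdeal.span (macRelsOfWeight g w) := by
  rintro _ ⟨I, J, K, q, hnd, hw, rfl⟩
  match I, J, q, K with
  | i :: I, J, q, K =>
    rw [macRel_cons_left]
    exact TwoSidedIdeal.mul_mem_left _ _ _
      (macRel_mem_span_macRelsOfWeight hnd.of_cons (by simp only [List.length_cons] at hw; omega))
  | [], j :: J, q, K =>
    rw [macRel_nil_cons]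
    exact TwoSidedIdeal.mul_mem_left _ _ _
      (macRel_mem_span_macRelsOfWeight hnd.of_cons (by simp only [List.length_cons] at hw; omega))
  | [], [], q + 1, K =>
    rw [macRel_succ]
    exact TwoSidedIdeal.mul_mem_right _ _ _ (macRel_mem_span_macRelsOfWeight hnd (by omega))
  | [], [], 0, [] => simp at hw
  | [], [], 0, k :: K =>
    simp only [List.length_nil, List.length_cons] at hw
    rw [macRel_nil_nil_cons_zero]
    refine TwoSidedIdeal.sub_mem _ (macRel_mem_span_macRelsOfWeight hnd.of_cons ?_)
      (TwoSidedIdeal.mul_mem_left _ _ _ (macRel_mem_span_macRelsOfWeight hnd ?_)) <;>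
    simp only [List.length_nil, List.length_cons] <;> omega

theorem macRelsOfWeight_subset_IMac {n w : ℕ} (hw : n + 1 ≤ w) :
    macRelsOfWeight g w ⊆ IMac g n := by
  induction w, hw using Nat.le_induction with
  | base => rw [IMac_eq_span_macRelsOfWeight]; exact TwoSidedIdeal.subset_span
  | succ w _ ih =>
    exact (macRelsOfWeight_succ_subset_span w).trans (TwoSidedIdeal.span_le.2 ih)

end MacdonaldRelations

theorem macRel_mem_IMac_of_weight_ge_general (g n : ℕ)
    (I J K : List (Fin g)) (q : ℕ) (hnd : (I ++ J ++ K).Nodup)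
    (hw : n + 1 ≤ I.length + J.length + 2 * K.length + q) :
    macRel g I J K q ∈ IMac g n :=
  macRelsOfWeight_subset_IMac hw ⟨I, J, K, q, hnd, rfl, rfl⟩

/-- Every Macdonald relation of weight at least `n+1` belongs to `I_Mac`. -/
theorem macRel_mem_IMac_of_weight_ge (g n : ℕ) (hg : 1 ≤ g) (hn : 2 ≤ n)
    (I J K : List (Fin g)) (q : ℕ) (hnd : (I ++ J ++ K).Nodup)
    (hw : n + 1 ≤ I.length + J.length + 2 * K.length + q) :
    macRel g I J K q ∈ IMac g n :=
  macRel_mem_IMac_of_weight_ge_general g n I J K q hnd hw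
end
end

section
/- Every homogeneous element of E of degree s ≥ 2n+1 belongs to I_Mac; that is, E^s = I_Mac ∩ E^s for all s ≥ 2n+1. -/
noncomputable section

open Polynomial

namespace MacAux

/-- A single degree-one generator. -/
def gen (g : ℕ) (v : Fin g ⊕ Fin g) : E g :=
  ExteriorAlgebra.ι (Polynomial ℤ) (Pi.single v 1)

/-- Product of a list of generators. -/
def gp (g : ℕ) (L : List (Fin g ⊕ Fin g)) : E g := (L.map (gen g)).prod

variable {g : ℕ}

lemma gp_nil : gp g [] = 1 := rfl

lemma gp_cons (v : Fin g ⊕ Fin g) (L : List (Fin g ⊕ Fin g)) :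
    gp g (v :: L) = gen g v * gp g L := by
  simp [gp]

lemma gp_append (L₁ L₂ : List (Fin g ⊕ Fin g)) :
    gp g (L₁ ++ L₂) = gp g L₁ * gp g L₂ := by
  simp [gp]

lemma gen_anticomm (v w : Fin g ⊕ Fin g) :
    gen g v * gen g w = -(gen g w * gen g v) :=
  eq_neg_of_add_eq_zero_left
    (ExteriorAlgebra.ι_add_mul_swap (R := Polynomial ℤ) (Pi.single v 1) (Pi.single w 1))

lemma gp_perm {L₁ L₂ : List (Fin g ⊕ Fin g)} (h : L₁.Perm L₂) :
    gp g L₁ = gp g L₂ ∨ gp g L₁ = -gp g L₂ := by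
  induction h with
  | nil => exact Or.inl rfl
  | cons a h ih =>
    rcases ih with h' | h'
    · exact Or.inl (by rw [gp_cons, gp_cons, h'])
    · exact Or.inr (by rw [gp_cons, gp_cons, h', mul_neg])
  | swap a b l =>
    refine Or.inr ?_
    rw [gp_cons, gp_cons, gp_cons, gp_cons, ← mul_assoc, ← mul_assoc,
      gen_anticomm b a, neg_mul]
  | trans h₁ h₂ ih₁ ih₂ =>
    rcases ih₁ with h' | h' <;> rcases ih₂ with h'' | h''
    · exact Or.inl (h'.trans h'')
    · exact Or.inr (h'.trans h'')
    · exact Or.inr (by rw [h', h''])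
    · exact Or.inl (by rw [h', h'', neg_neg])

lemma xprod (L : List (Fin g)) :
    (L.map (x g)).prod = gp g (L.map Sum.inl) := by
  rw [gp, List.map_map]; rfl

lemma x'prod (L : List (Fin g)) :
    (L.map (x' g)).prod = gp g (L.map Sum.inr) := by
  rw [gp, List.map_map]; rfl

lemma ypow_comm (z : E g) (k : ℕ) : y g ^ k * z = z * y g ^ k := by
  have h : Commute (y g) z := Algebra.commutes Polynomial.X z
  exact (h.pow_left k).eq

/-- Sorting a finset splits, up to permutation, along a subset. -/
lemma sort_sdiff_perm (A I : Finset (Fin g)) (h : I ⊆ A) :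
    (A.sort (· ≤ ·)).Perm ((A \ I).sort (· ≤ ·) ++ I.sort (· ≤ ·)) := by
  rw [← Multiset.coe_eq_coe, ← Multiset.coe_add, Finset.sort_eq, Finset.sort_eq,
    Finset.sort_eq, Finset.sdiff_val]
  exact (tsub_add_cancel_of_le (Finset.val_le_iff.mpr h)).symm

lemma monomial_factor (A B I J : Finset (Fin g)) (hIA : I ⊆ A) (hJB : J ⊆ B)
    (q q' : ℕ) (hq : q' ≤ q) :
    ∃ u : E g, emonomial g A B q =
      u * macRel g (I.sort (· ≤ ·)) (J.sort (· ≤ ·)) [] q' := by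
  obtain ⟨t, rfl⟩ : ∃ t, q = t + q' := ⟨q - q', by omega⟩
  set LA := A.sort (· ≤ ·) with hLA
  set LB := B.sort (· ≤ ·) with hLB
  set LA' := (A \ I).sort (· ≤ ·) with hLA'
  set LB' := (B \ J).sort (· ≤ ·) with hLB'
  set LI := I.sort (· ≤ ·) with hLI
  set LJ := J.sort (· ≤ ·) with hLJ
  -- the big permutation
  have hperm : (LA.map Sum.inl ++ LB.map Sum.inr).Perm
      ((LA'.map Sum.inl ++ LB'.map Sum.inr) ++ (LI.map Sum.inl ++ LJ.map Sum.inr)) := by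
    rw [← Multiset.coe_eq_coe]
    have hA : (LA : Multiset (Fin g)) = (LA' : Multiset (Fin g)) + (LI : Multiset (Fin g)) := by
      rw [Multiset.coe_add, Multiset.coe_eq_coe]
      exact sort_sdiff_perm A I hIA
    have hB : (LB : Multiset (Fin g)) = (LB' : Multiset (Fin g)) + (LJ : Multiset (Fin g)) := by
      rw [Multiset.coe_add, Multiset.coe_eq_coe]
      exact sort_sdiff_perm B J hJB
    simp only [← Multiset.coe_add, ← Multiset.map_coe] at *
    rw [hA, hB, Multiset.map_add, Multiset.map_add]
    abel
  -- rewrite both sides via `gp`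
  have hmono : emonomial g A B (t + q') =
      gp g (LA.map Sum.inl ++ LB.map Sum.inr) * y g ^ (t + q') := by
    rw [emonomial, xprod, x'prod, ← gp_append]
  have hmac : macRel g LI LJ [] q' =
      gp g (LI.map Sum.inl ++ LJ.map Sum.inr) * y g ^ q' := by
    rw [macRel, List.map_nil, List.prod_nil, mul_one, xprod, x'prod, ← gp_append]
  have key : ∀ a b : E g, (a * y g ^ t) * (b * y g ^ q') = (a * b) * y g ^ (t + q') := by
    intro a b
    rw [mul_assoc a, ← mul_assoc (y g ^ t), ypow_comm b t, mul_assoc b, ← pow_add,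
      ← mul_assoc]
  rcases gp_perm hperm with h | h
  · refine ⟨gp g (LA'.map Sum.inl ++ LB'.map Sum.inr) * y g ^ t, ?_⟩
    rw [hmono, hmac, key, ← gp_append, h]
  · refine ⟨-(gp g (LA'.map Sum.inl ++ LB'.map Sum.inr) * y g ^ t), ?_⟩
    rw [hmono, hmac, neg_mul, key, ← gp_append, h, neg_mul]

/-- The combinatorial selection of the divisor relation. -/
lemma select (A B : Finset (Fin g)) (q n : ℕ)
    (h : 2 * n + 1 ≤ A.card + B.card + 2 * q) :
    ∃ (I J : Finset (Fin g)) (q' : ℕ), I ⊆ A ∧ J ⊆ B ∧ Disjoint I J ∧ q' ≤ q ∧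
      I.card + J.card + q' = n + 1 := by
  by_cases hA : n + 1 ≤ A.card
  · obtain ⟨I, hI, hIc⟩ := Finset.exists_subset_card_eq hA
    exact ⟨I, ∅, 0, hI, Finset.empty_subset _, Finset.disjoint_empty_right _,
      Nat.zero_le _, by simp [hIc]⟩
  · push_neg at hA
    have hBA : B.card ≤ A.card + (B \ A).card := by
      have := Finset.card_le_card (show B ⊆ A ∪ (B \ A) by
        intro b hb
        by_cases hbA : b ∈ A
        · exact Finset.mem_union_left _ hbA
        · exact Finset.mem_union_right _ (Finset.mem_sdiff.mpr ⟨hb, hbA⟩))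
      calc B.card ≤ (A ∪ (B \ A)).card := this
        _ ≤ A.card + (B \ A).card := Finset.card_union_le _ _
    by_cases hB : n + 1 - A.card ≤ (B \ A).card
    · obtain ⟨J, hJ, hJc⟩ := Finset.exists_subset_card_eq hB
      refine ⟨A, J, 0, subset_rfl, hJ.trans (Finset.sdiff_subset), ?_, Nat.zero_le _, by omega⟩
      exact (Finset.disjoint_sdiff).mono_right hJ
    · push_neg at hB
      refine ⟨A, B \ A, n + 1 - A.card - (B \ A).card, subset_rfl, Finset.sdiff_subset,
        Finset.disjoint_sdiff, by omega, by omega⟩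

lemma emonomial_mem (n : ℕ) (A B : Finset (Fin g)) (q : ℕ)
    (h : 2 * n + 1 ≤ A.card + B.card + 2 * q) :
    emonomial g A B q ∈ IMac g n := by
  obtain ⟨I, J, q', hIA, hJB, hdisj, hq', hsum⟩ := select A B q n h
  obtain ⟨u, hu⟩ := monomial_factor A B I J hIA hJB q q' hq'
  rw [hu]
  refine TwoSidedIdeal.mul_mem_left _ _ _ (TwoSidedIdeal.subset_span ?_)
  refine ⟨I.sort (· ≤ ·), J.sort (· ≤ ·), [], q', ?_, ?_, rfl⟩
  · rw [List.append_nil]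
    refine List.Nodup.append (Finset.sort_nodup _ _) (Finset.sort_nodup _ _) ?_
    intro a haI haJ
    exact (Finset.disjoint_left.mp hdisj ((Finset.mem_sort _).mp haI))
      ((Finset.mem_sort _).mp haJ)
  · simp only [Finset.length_sort, List.length_nil]
    omega

end MacAux

/-- Every homogeneous element of `E` of degree `s ≥ 2n + 1` belongs to `I_Mac`. -/
theorem high_degree_subset_IMac (g n s : ℕ) (hg : 1 ≤ g) (hn : 2 ≤ n)
    (hs : 2 * n + 1 ≤ s) (z : E g) (hz : z ∈ Ecomp g s) :
    z ∈ IMac g n := by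
  have hle : Ecomp g s ≤
      Submodule.restrictScalars ℤ (TwoSidedIdeal.asIdeal (IMac g n)) := by
    rw [Ecomp]
    apply Submodule.span_le.mpr
    rintro _ ⟨A, B, q, hdeg, rfl⟩
    simp only [Submodule.restrictScalars_mem, SetLike.mem_coe, TwoSidedIdeal.mem_asIdeal]
    exact MacAux.emonomial_mem n A B q (by omega)
  exact TwoSidedIdeal.mem_asIdeal.mp (hle hz)
end
end

section
/- Every homogeneous element of I_Mac of degree s ≤ n is zero; that is, I_Mac ∩ E^s = 0 for all 0 ≤ s ≤ n. In particular, the quotient ring E/I_Mac is torsion-free in degrees 0 ≤ s ≤ n. -/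
/-
Give `x_i, x'_i` degree 1 and `y` degree 2. Over `ℤ`, `E` has the basis `y^p • e_S`, where the
`e_S` are the exterior monomials over `ℤ[y]`, and `y^p • e_S` has degree `|S| + 2p`. Left
multiplication by a generator raises degrees by the generator's degree, so the span `F` of the
basis vectors of degree `≥ n + 1` is a left ideal, and `r * u ∈ F` for every `u` and every
Macdonald relation `r` of weight `n + 1`, whose degree is at least `n + 1`. Hence `I_Mac` lies in
the largest two-sided ideal contained in `F`, while `E^s` lies in the span of the basis vectors of
degree `s`; for `s ≤ n` these two spans meet only in `0`. Torsion-freeness follows because `E` is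
a free `ℤ`-module.
-/

noncomputable section

open Polynomial

open Module Set.powersetCard

namespace ExteriorAlgebra

section Basis

variable {R M I : Type*} [CommRing R] [AddCommGroup M] [Module R M] [LinearOrder I]
  (b : Basis I R M)

lemma basis_singleton (i : I) : b.ExteriorAlgebra {i} = ι R (b i) := by
  rw [basis_apply_ofCard b (Finset.card_singleton i), ιMulti_family, ιMulti_apply]
  have h : ofFinEmbEquiv.symm (ofCard (Finset.card_singleton i)) 0 = i :=
    Finset.mem_singleton.mp
      ((mem_range_ofFinEmbEquiv_symm_iff_mem (ofCard (Finset.card_singleton i)) _).mp ⟨0, rfl⟩)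
  simp [h]

lemma ι_mul_basis_of_mem {i : I} {S : Finset I} (hi : i ∈ S) :
    ι R (b i) * b.ExteriorAlgebra S = 0 := by
  rw [← basis_singleton, basis_apply_ofCard b (Finset.card_singleton i),
    basis_apply_ofCard b rfl]
  exact ιMulti_family_mul_of_not_disjoint R b _ _ (by simpa [val_ofCard] using hi)

lemma exists_ι_mul_basis_of_notMem {i : I} {S : Finset I} (hi : i ∉ S) :
    ∃ ε : ℤˣ, ι R (b i) * b.ExteriorAlgebra S = ε • b.ExteriorAlgebra (insert i S) := by
  have hd : Disjoint (ofCard (Finset.card_singleton i)).val (ofCard (s := S) rfl).val := by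
    simpa [val_ofCard] using hi
  refine ⟨(permOfDisjoint hd).sign, ?_⟩
  have h := basis_mul_of_disjoint b _ _ hd
  rw [coe_disjUnion] at h
  simpa [val_ofCard, basis_singleton] using h

end Basis

section Degree

variable {R M I : Type*} [CommRing R] [AddCommGroup M] [Module R M] [Module R[X] M]
  [IsScalarTower R R[X] M] [LinearOrder I] (b : Basis I R[X] M)

def monomialBasis : Basis (ℕ × Finset I) R (ExteriorAlgebra R[X] M) :=
  (basisMonomials R).smulTower b.ExteriorAlgebra

lemma monomialBasis_apply (k : ℕ × Finset I) :
    monomialBasis b k = (X ^ k.1 : R[X]) • b.ExteriorAlgebra k.2 := by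
  simp only [monomialBasis, Basis.smulTower_apply, coe_basisMonomials,
    monomial_one_right_eq_X_pow]

def monomialDegree (k : ℕ × Finset I) : ℕ := k.2.card + 2 * k.1

def degreeSpan (P : Set ℕ) : Submodule R (ExteriorAlgebra R[X] M) :=
  Submodule.span R (monomialBasis b '' (monomialDegree ⁻¹' P))

lemma one_mem_degreeSpan_zero : (1 : ExteriorAlgebra R[X] M) ∈ degreeSpan b {0} := by
  have h : monomialBasis b (0, ∅) = 1 := by simp [monomialBasis_apply, basis_apply]
  exact h ▸ Submodule.subset_span (Set.mem_image_of_mem _ (by simp [monomialDegree]))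

variable {b}

lemma degreeSpan_mono {P Q : Set ℕ} (h : P ⊆ Q) : degreeSpan b P ≤ degreeSpan (R := R) b Q :=
  Submodule.span_mono (Set.image_mono (Set.preimage_mono h))

lemma degreeSpan_univ : degreeSpan (R := R) b Set.univ = ⊤ := by
  rw [degreeSpan, Set.preimage_univ, Set.image_univ, Basis.span_eq]

lemma disjoint_degreeSpan {P Q : Set ℕ} (h : Disjoint P Q) :
    Disjoint (degreeSpan (R := R) b P) (degreeSpan b Q) := by
  refine Submodule.disjoint_def.mpr fun u hP hQ => ?_
  rw [degreeSpan, Basis.mem_span_image] at hP hQ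
  have hsupp : ((monomialBasis b).repr u).support = ∅ :=
    Finset.eq_empty_of_forall_notMem fun k hk => Set.disjoint_left.mp h (hP hk) (hQ hk)
  exact (monomialBasis b).repr.map_eq_zero_iff.mp (Finsupp.support_eq_empty.mp hsupp)

lemma ι_mul_mem_degreeSpan {P Q : Set ℕ} (hPQ : ∀ w ∈ P, w + 1 ∈ Q) (i : I)
    {u : ExteriorAlgebra R[X] M} (hu : u ∈ degreeSpan b P) :
    ι R[X] (b i) * u ∈ degreeSpan b Q := by
  induction hu using Submodule.span_induction with
  | mem _ hk =>
    obtain ⟨⟨p, S⟩, hk, rfl⟩ := hk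
    rw [monomialBasis_apply, mul_smul_comm]
    by_cases hi : i ∈ S
    · rw [ι_mul_basis_of_mem b hi, smul_zero]
      exact zero_mem _
    · obtain ⟨ε, hε⟩ := exists_ι_mul_basis_of_notMem b hi
      rw [hε, smul_comm, ← monomialBasis_apply b (p, insert i S)]
      refine zsmul_mem (Submodule.subset_span (Set.mem_image_of_mem _ ?_)) _
      have := hPQ _ hk
      simp only [Set.mem_preimage, monomialDegree, Finset.card_insert_of_notMem hi] at this ⊢
      convert this using 1
      omega
  | zero => simp
  | add _ _ _ _ h₁ h₂ => simpa [mul_add] using add_mem h₁ h₂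
  | smul c _ _ h => simpa [mul_smul_comm] using Submodule.smul_mem _ c h

lemma X_smul_mem_degreeSpan {P Q : Set ℕ} (hPQ : ∀ w ∈ P, w + 2 ∈ Q)
    {u : ExteriorAlgebra R[X] M} (hu : u ∈ degreeSpan b P) :
    (X : R[X]) • u ∈ degreeSpan b Q := by
  induction hu using Submodule.span_induction with
  | mem _ hk =>
    obtain ⟨⟨p, S⟩, hk, rfl⟩ := hk
    rw [monomialBasis_apply, smul_smul, ← pow_succ', ← monomialBasis_apply b (p + 1, S)]
    refine Submodule.subset_span (Set.mem_image_of_mem _ ?_)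
    have := hPQ _ hk
    simp only [Set.mem_preimage, monomialDegree] at this ⊢
    convert this using 1
    omega
  | zero => simp
  | add _ _ _ _ h₁ h₂ => simpa [smul_add] using add_mem h₁ h₂
  | smul c _ _ h => simpa [smul_comm (X : R[X]) c] using Submodule.smul_mem _ c h

variable (b) in
def RaisesDegreeBy (d : ℕ) (a : ExteriorAlgebra R[X] M) : Prop :=
  ∀ ⦃P Q : Set ℕ⦄, (∀ w ∈ P, w + d ∈ Q) →
    ∀ ⦃u⦄, u ∈ degreeSpan b P → a * u ∈ degreeSpan b Q

variable (b) in
lemma raisesDegreeBy_ι (i : I) : RaisesDegreeBy b 1 (ι R[X] (b i)) :=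
  fun _ _ hPQ _ hu => ι_mul_mem_degreeSpan hPQ i hu

variable (b) in
lemma raisesDegreeBy_X : RaisesDegreeBy b 2 (algebraMap R[X] (ExteriorAlgebra R[X] M) X) :=
  fun _ _ hPQ _ hu => by
    rw [← Algebra.smul_def]
    exact X_smul_mem_degreeSpan hPQ hu

variable (b) in
lemma raisesDegreeBy_one : RaisesDegreeBy b 0 1 :=
  fun _ _ hPQ _ hu => by
    rw [one_mul]
    exact degreeSpan_mono (fun w hw => hPQ w hw) hu

namespace RaisesDegreeBy

variable {d e : ℕ} {a c : ExteriorAlgebra R[X] M}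

lemma mul (ha : RaisesDegreeBy b d a) (hc : RaisesDegreeBy b e c) :
    RaisesDegreeBy b (d + e) (a * c) := fun P Q hPQ u hu => by
  rw [mul_assoc]
  refine ha (P := {w | w + d ∈ Q}) (fun w hw => hw) (hc (fun w hw => ?_) hu)
  simpa [add_assoc, add_comm e d] using hPQ w hw

lemma sub (ha : RaisesDegreeBy b d a) (hc : RaisesDegreeBy b d c) :
    RaisesDegreeBy b d (a - c) := fun _ _ hPQ _ hu => by
  rw [sub_mul]
  exact sub_mem (ha hPQ hu) (hc hPQ hu)

lemma list_prod {L : List (ExteriorAlgebra R[X] M)} (h : ∀ a ∈ L, RaisesDegreeBy b d a) :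
    RaisesDegreeBy b (d * L.length) L.prod := by
  induction L with
  | nil => simpa using raisesDegreeBy_one b
  | cons a L ih =>
    rw [List.prod_cons, List.length_cons, Nat.mul_succ, add_comm]
    exact (h a List.mem_cons_self).mul (ih fun c hc => h c (List.mem_cons_of_mem a hc))

lemma list_prod_map {α : Type*} {f : α → ExteriorAlgebra R[X] M}
    (hf : ∀ a, RaisesDegreeBy b d (f a)) (L : List α) :
    RaisesDegreeBy b (d * L.length) (L.map f).prod := by
  simpa using list_prod (L := L.map f) (by simpa using fun a _ => hf a)

lemma pow (ha : RaisesDegreeBy b d a) (k : ℕ) : RaisesDegreeBy b (d * k) (a ^ k) := by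
  simpa using list_prod (L := List.replicate k a) (by simpa using fun _ => ha)

end RaisesDegreeBy

lemma smul_mem_degreeSpan_Ici {m : ℕ} (r : R[X]) {u : ExteriorAlgebra R[X] M}
    (hu : u ∈ degreeSpan b (Set.Ici m)) : r • u ∈ degreeSpan b (Set.Ici m) := by
  induction r using Polynomial.induction_on' with
  | add p q hp hq => simpa [add_smul] using add_mem hp hq
  | monomial k c =>
    rw [← smul_X_eq_monomial, smul_assoc]
    refine Submodule.smul_mem _ c ?_
    rw [Algebra.smul_def, map_pow]
    refine (raisesDegreeBy_X b).pow k (fun w hw => ?_) hu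
    simp only [Set.mem_Ici] at hw ⊢
    omega

lemma mul_mem_degreeSpan_Ici {m : ℕ} (a : ExteriorAlgebra R[X] M) {u : ExteriorAlgebra R[X] M}
    (hu : u ∈ degreeSpan b (Set.Ici m)) : a * u ∈ degreeSpan b (Set.Ici m) := by
  induction a using ExteriorAlgebra.induction generalizing u with
  | algebraMap r =>
    rw [← Algebra.smul_def]
    exact smul_mem_degreeSpan_Ici r hu
  | ι v =>
    induction b.mem_span v using Submodule.span_induction with
    | mem _ hv =>
      obtain ⟨i, rfl⟩ := hv
      exact raisesDegreeBy_ι b i (fun w hw => by simp only [Set.mem_Ici] at hw ⊢; omega) hu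
    | zero => simp
    | add _ _ _ _ h₁ h₂ => simpa [add_mul] using add_mem h₁ h₂
    | smul r _ _ h => simpa [smul_mul_assoc] using smul_mem_degreeSpan_Ici r h
  | mul a c ha hc => simpa [mul_assoc] using ha (hc hu)
  | add a c ha hc => simpa [add_mul] using add_mem (ha hu) (hc hu)

end Degree

end ExteriorAlgebra

open ExteriorAlgebra

-- `Lex` only supplies the linear order indexing the exterior basis; any order would do.
def generatorBasis (g : ℕ) :
    Basis (Lex (Fin g ⊕ Fin g)) ℤ[X] ((Fin g ⊕ Fin g) → ℤ[X]) :=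
  (Pi.basisFun ℤ[X] (Fin g ⊕ Fin g)).reindex toLex

lemma raisesDegreeBy_x {g : ℕ} (i : Fin g) : RaisesDegreeBy (generatorBasis g) 1 (x g i) := by
  simpa [generatorBasis, x] using raisesDegreeBy_ι (generatorBasis g) (toLex (Sum.inl i))

lemma raisesDegreeBy_x' {g : ℕ} (i : Fin g) : RaisesDegreeBy (generatorBasis g) 1 (x' g i) := by
  simpa [generatorBasis, x'] using raisesDegreeBy_ι (generatorBasis g) (toLex (Sum.inr i))

lemma raisesDegreeBy_y (g : ℕ) : RaisesDegreeBy (generatorBasis g) 2 (y g) :=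
  raisesDegreeBy_X (generatorBasis g)

lemma raisesDegreeBy_macRel {g : ℕ} (I J K : List (Fin g)) (q : ℕ) :
    RaisesDegreeBy (generatorBasis g) (I.length + J.length + 2 * K.length + 2 * q)
      (macRel g I J K q) := by
  have hK := RaisesDegreeBy.list_prod_map
    (fun k => (raisesDegreeBy_y g).sub ((raisesDegreeBy_x k).mul (raisesDegreeBy_x' k))) K
  simpa [macRel] using
    (((RaisesDegreeBy.list_prod_map raisesDegreeBy_x I).mul
      (RaisesDegreeBy.list_prod_map raisesDegreeBy_x' J)).mul hK).mul
      ((raisesDegreeBy_y g).pow q)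

lemma mem_degreeSpan_of_mem_Ecomp {g s : ℕ} {z : E g} (hz : z ∈ Ecomp g s) :
    z ∈ degreeSpan (generatorBasis g) {s} := by
  refine Submodule.span_le.mpr ?_ hz
  rintro _ ⟨A, B, q, rfl, rfl⟩
  have h := (((RaisesDegreeBy.list_prod_map raisesDegreeBy_x (A.sort (· ≤ ·))).mul
    (RaisesDegreeBy.list_prod_map raisesDegreeBy_x' (B.sort (· ≤ ·)))).mul
    ((raisesDegreeBy_y g).pow q)) (P := {0}) (Q := {A.card + B.card + 2 * q}) (by simp)
    (one_mem_degreeSpan_zero _)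
  simpa [emonomial] using h

lemma mem_degreeSpan_of_mem_IMac {g n : ℕ} {z : E g} (hz : z ∈ IMac g n) :
    z ∈ degreeSpan (generatorBasis g) (Set.Ici (n + 1)) := by
  -- the largest two-sided ideal inside the left ideal `degreeSpan (generatorBasis g) (Ici (n + 1))`
  let J : TwoSidedIdeal (E g) := TwoSidedIdeal.mk'
    {z | ∀ u, z * u ∈ degreeSpan (generatorBasis g) (Set.Ici (n + 1))}
    (fun u => by simp)
    (fun ha hc u => by simpa [add_mul] using add_mem (ha u) (hc u))
    (fun ha u => by simpa [neg_mul] using neg_mem (ha u))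
    (fun {a _} hc u => by simpa [mul_assoc] using mul_mem_degreeSpan_Ici a (hc u))
    (fun {_ c} ha u => by simpa [mul_assoc] using ha (c * u))
  have hJ : IMac g n ≤ J := by
    refine TwoSidedIdeal.span_le.mpr ?_
    rintro _ ⟨I, K, L, q, -, hw, rfl⟩
    rw [SetLike.mem_coe, TwoSidedIdeal.mem_mk']
    intro u
    refine raisesDegreeBy_macRel I K L q (P := Set.univ) (fun w _ => ?_)
      (by simp [degreeSpan_univ])
    simp only [Set.mem_Ici]
    omega
  have hzJ := hJ hz
  rw [TwoSidedIdeal.mem_mk'] at hzJ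
  simpa using hzJ 1

lemma eq_zero_of_mem_Ecomp_of_mem_IMac {g n s : ℕ} (hs : s ≤ n) {z : E g}
    (hz : z ∈ Ecomp g s) (hI : z ∈ IMac g n) : z = 0 :=
  Submodule.disjoint_def.mp
    (disjoint_degreeSpan (Set.disjoint_singleton_left.mpr (by simp only [Set.mem_Ici]; omega)))
    z (mem_degreeSpan_of_mem_Ecomp hz) (mem_degreeSpan_of_mem_IMac hI)

theorem IMac_trivial_in_low_degrees_general (g n s : ℕ) (hs : s ≤ n) :
    (∀ z : E g, z ∈ Ecomp g s → z ∈ IMac g n → z = 0) ∧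
    (∀ z : E g, z ∈ Ecomp g s → ∀ m : ℤ, m ≠ 0 → m • z ∈ IMac g n → z ∈ IMac g n) := by
  refine ⟨fun z hz hI => eq_zero_of_mem_Ecomp_of_mem_IMac hs hz hI, fun z hz m hm hmz => ?_⟩
  have hmz0 : m • z = 0 :=
    eq_zero_of_mem_Ecomp_of_mem_IMac hs (Submodule.smul_mem _ m hz) hmz
  rw [((monomialBasis (generatorBasis g)).smul_eq_zero.mp hmz0).resolve_left hm]
  exact zero_mem _

/-- Every homogeneous element of `I_Mac` of degree `s ≤ n` is zero; in particular the
quotient `E/I_Mac` is torsion-free in degrees `0 ≤ s ≤ n`. -/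
theorem IMac_trivial_in_low_degrees (g n s : ℕ) (hg : 1 ≤ g) (hn : 2 ≤ n) (hs : s ≤ n) :
    (∀ z : E g, z ∈ Ecomp g s → z ∈ IMac g n → z = 0) ∧
    (∀ z : E g, z ∈ Ecomp g s → ∀ m : ℤ, m ≠ 0 → m • z ∈ IMac g n → z ∈ IMac g n) :=
  IMac_trivial_in_low_degrees_general g n s hs
end
end

section
/- Let q̃ ≥ 1 and let i_1,…,i_ã, j_1,…,j_b̃, k_1,…,k_c̃ ∈ {1,…,g} be pairwise distinct with ã + b̃ + 2c̃ + q̃ = n+1 and ã + b̃ ≥ 1. Then the Macdonald relation x_{i_1}⋯x_{i_ã}·x'_{j_1}⋯x'_{j_b̃}·(y − x_{k_1}x'_{k_1})⋯(y − x_{k_c̃}x'_{k_c̃})·y^{q̃} lies in the ideal of E generated by the Macdonald relations of weight n+1 whose exponent of y is strictly smaller than q̃. -/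
noncomputable section

open Polynomial

section Aux

variable {g : ℕ}

private lemma iota_anticomm (u v : (Fin g ⊕ Fin g) → Polynomial ℤ) :
    ExteriorAlgebra.ι (Polynomial ℤ) u * ExteriorAlgebra.ι (Polynomial ℤ) v =
      -(ExteriorAlgebra.ι (Polynomial ℤ) v * ExteriorAlgebra.ι (Polynomial ℤ) u) :=
  eq_neg_of_add_eq_zero_left (ExteriorAlgebra.ι_add_mul_swap u v)

private lemma comm_iota (u v w : (Fin g ⊕ Fin g) → Polynomial ℤ) :
    Commute (ExteriorAlgebra.ι (Polynomial ℤ) u * ExteriorAlgebra.ι (Polynomial ℤ) v)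
      (ExteriorAlgebra.ι (Polynomial ℤ) w) := by
  show _ = _
  rw [mul_assoc, iota_anticomm v w, mul_neg, ← mul_assoc, iota_anticomm u w, neg_mul, neg_neg,
    mul_assoc]

private lemma commy (z : E g) : Commute (y g) z := Algebra.commutes _ _

private lemma comm_xx'_x (i k : Fin g) : Commute (x g i * x' g i) (x g k) :=
  comm_iota _ _ _

private lemma comm_xx'_x' (i k : Fin g) : Commute (x g i * x' g i) (x' g k) :=
  comm_iota _ _ _

private lemma comm_xx'_A (i : Fin g) (L : List (Fin g)) :
    Commute (x g i * x' g i) ((L.map (x g)).prod) := by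
  refine Commute.list_prod_right _ _ ?_
  intro w hw
  obtain ⟨k, _, rfl⟩ := List.mem_map.1 hw
  exact comm_xx'_x i k

private lemma comm_xx'_B (i : Fin g) (L : List (Fin g)) :
    Commute (x g i * x' g i) ((L.map (x' g)).prod) := by
  refine Commute.list_prod_right _ _ ?_
  intro w hw
  obtain ⟨k, _, rfl⟩ := List.mem_map.1 hw
  exact comm_xx'_x' i k

private lemma comm_xx'_Kp (i : Fin g) (L : List (Fin g)) :
    Commute (x g i * x' g i) ((L.map (fun k => y g - x g k * x' g k)).prod) := by
  refine Commute.list_prod_right _ _ ?_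
  intro w hw
  obtain ⟨k, _, rfl⟩ := List.mem_map.1 hw
  exact ((commy _).symm).sub_right ((comm_xx'_x i k).mul_right (comm_xx'_x' i k))

private lemma step_eq (z c Kp P : E g) (q : ℕ)
    (hzc : z * c = 0) (hcP : Commute c P) (hcKp : Commute c Kp) :
    z * (P * ((y g - c) * Kp) * (y g) ^ q) = z * P * Kp * (y g) ^ (q + 1) := by
  have h1 : (y g - c) * Kp = Kp * (y g - c) := ((commy Kp).sub_left hcKp).eq
  have h0 : ∀ X : E g, z * (P * (Kp * (c * X))) = 0 := by
    intro X
    have e : P * (Kp * (c * X)) = c * (P * (Kp * X)) := by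
      rw [← mul_assoc Kp c, ← hcKp.eq, mul_assoc c Kp, ← mul_assoc P c, ← hcP.eq, mul_assoc]
    rw [e, ← mul_assoc, hzc, zero_mul]
  rw [h1]
  simp only [mul_sub, sub_mul, mul_assoc]
  rw [h0, sub_zero, ← pow_succ']

private lemma case_x (i : Fin g) (I' J K : List (Fin g)) (q : ℕ) :
    macRel g (i :: I') J K (q + 1) = x g i * macRel g I' J (i :: K) q := by
  have hzc : x g i * (x g i * x' g i) = 0 := by
    have h : x g i * x g i = 0 := ExteriorAlgebra.ι_sq_zero _
    rw [← mul_assoc, h, zero_mul]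
  simp only [macRel, List.map_cons, List.prod_cons]
  rw [step_eq (x g i) (x g i * x' g i) _
      ((I'.map (x g)).prod * (J.map (x' g)).prod) q hzc
      ((comm_xx'_A i I').mul_right (comm_xx'_B i J)) (comm_xx'_Kp i K)]
  simp only [mul_assoc]

private lemma case_x' (j : Fin g) (J' K : List (Fin g)) (q : ℕ) :
    macRel g [] (j :: J') K (q + 1) = x' g j * macRel g [] J' (j :: K) q := by
  have hanti : x' g j * x g j = -(x g j * x' g j) := iota_anticomm _ _
  have hsq : x' g j * x' g j = 0 := ExteriorAlgebra.ι_sq_zero _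
  have hzc : x' g j * (x g j * x' g j) = 0 := by
    rw [← mul_assoc, hanti, neg_mul, mul_assoc, hsq, mul_zero, neg_zero]
  simp only [macRel, List.map_cons, List.prod_cons, List.map_nil, List.prod_nil, one_mul]
  rw [step_eq (x' g j) (x g j * x' g j) _
      ((J'.map (x' g)).prod) q hzc (comm_xx'_B j J') (comm_xx'_Kp j K)]

end Aux

/-- A Macdonald relation of weight `n+1` with `q̃ ≥ 1` and `ã + b̃ ≥ 1` lies in the ideal
generated by the Macdonald relations of weight `n+1` whose exponent of `y` is strictly
smaller than `q̃`. -/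
theorem macRel_mem_span_smaller_q (g n : ℕ) (hg : 1 ≤ g) (hn : 2 ≤ n)
    (I J K : List (Fin g)) (q : ℕ) (hq : 1 ≤ q) (hnd : (I ++ J ++ K).Nodup)
    (hw : I.length + J.length + 2 * K.length + q = n + 1)
    (hab : 1 ≤ I.length + J.length) :
    macRel g I J K q ∈ TwoSidedIdeal.span {z : E g |
      ∃ (I' J' K' : List (Fin g)) (q' : ℕ), (I' ++ J' ++ K').Nodup ∧
        I'.length + J'.length + 2 * K'.length + q' = n + 1 ∧ q' < q ∧
        z = macRel g I' J' K' q'} := by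
  obtain ⟨q', rfl⟩ : ∃ q', q = q' + 1 := ⟨q - 1, by omega⟩
  match I, J, hab with
  | i :: I', J, _ =>
    rw [case_x i I' J K q']
    refine TwoSidedIdeal.mul_mem_left _ _ _ (TwoSidedIdeal.subset_span ?_)
    refine ⟨I', J, i :: K, q', ?_, by simp at hw ⊢; omega, by omega, rfl⟩
    have hperm : List.Perm (I' ++ J ++ (i :: K)) (i :: (I' ++ J ++ K)) := by
      simpa [List.append_assoc] using List.perm_middle (a := i) (l₁ := I' ++ J) (l₂ := K)
    exact hperm.symm.nodup (by simpa using hnd)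
  | [], [], h => simp at h
  | [], j :: J', _ =>
    rw [case_x' j J' K q']
    refine TwoSidedIdeal.mul_mem_left _ _ _ (TwoSidedIdeal.subset_span ?_)
    refine ⟨[], J', j :: K, q', ?_, by simp at hw ⊢; omega, by omega, rfl⟩
    have hperm : List.Perm (([] : List (Fin g)) ++ J' ++ (j :: K)) (j :: (([] : List (Fin g)) ++ J' ++ K)) := by
      simpa [List.append_assoc] using List.perm_middle (a := j) (l₁ := ([] : List (Fin g)) ++ J') (l₂ := K)
    refine hperm.symm.nodup ?_
    simpa using hnd
end
end

section
/- Let q̃ ≥ 2 and 0 ≤ c̃ ≤ g−1 with 2c̃ + q̃ = n+1, and let k_1,…,k_c̃ ∈ {1,…,g} be pairwise distinct. Then the Macdonald relation (y − x_{k_1}x'_{k_1})⋯(y − x_{k_c̃}x'_{k_c̃})·y^{q̃} lies in the ideal of E generated by the Macdonald relations of weight n+1 with a = b = 0, c = c̃ + 1 and exponent of y equal to q̃ − 2. -/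
/-!
Since `K` has fewer than `g` indices, some `k` is missing from it. Put `z = x_k x'_k` and
`P = ∏_{j ∈ K} (y - x_j x'_j)`. Then `z² = 0`, and `z`, being even, commutes with `P`, so
`y² = (y - z) y + z (y - z)` gives `P y^q = s y + z s` for `s = P (y - z) y^{q-2}`, which is the
Macdonald relation of `K ++ [k]` with exponent `q - 2`.
-/

noncomputable section

open Polynomial

theorem commute_mul_of_mul_eq_neg_mul {R : Type*} [Ring R] {a b c : R}
    (hac : a * c = -(c * a)) (hbc : b * c = -(c * b)) : Commute (a * b) c := by
  calc a * b * c = -(a * (c * b)) := by rw [mul_assoc, hbc, mul_neg]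
    _ = c * (a * b) := by rw [← mul_assoc, hac, neg_mul, neg_neg, mul_assoc]

theorem mul_pow_add_two_eq_of_mul_self_eq_zero {R : Type*} [Ring R] {p y z : R}
    (hp : Commute z p) (hz : z * z = 0) (r : ℕ) :
    p * y ^ (r + 2) = p * (y - z) * y ^ r * y + z * (p * (y - z) * y ^ r) := by
  have hzyz : z * (p * (y - z) * y ^ r) = p * (z * y) * y ^ r := by
    rw [← mul_assoc, ← mul_assoc, hp.eq, mul_assoc p z, mul_sub, hz, sub_zero]
  rw [hzyz, mul_assoc _ (y ^ r), pow_mul_comm', pow_succ', pow_succ']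
  noncomm_ring

namespace ExteriorAlgebra

variable {R M : Type*} [CommRing R] [AddCommGroup M] [Module R M]

theorem ι_mul_ι_eq_neg (u v : M) : ι R u * ι R v = -(ι R v * ι R u) :=
  eq_neg_of_add_eq_zero_left (ι_add_mul_swap u v)

theorem commute_ι_mul_ι (a b c : M) : Commute (ι R a * ι R b) (ι R c) :=
  commute_mul_of_mul_eq_neg_mul (ι_mul_ι_eq_neg a c) (ι_mul_ι_eq_neg b c)

theorem ι_mul_ι_mul_self (a b : M) : ι R a * ι R b * (ι R a * ι R b) = 0 := by
  rw [← mul_assoc, (commute_ι_mul_ι a b a).eq, ← mul_assoc, ι_sq_zero, zero_mul, zero_mul]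

end ExteriorAlgebra

section Macdonald

variable {g : ℕ}

theorem commute_x_mul_x'_y (k : Fin g) : Commute (x g k * x' g k) (y g) :=
  (Algebra.commutes _ _).symm

theorem commute_x_mul_x'_prod_map_y_sub (k : Fin g) (K : List (Fin g)) :
    Commute (x g k * x' g k) (K.map (fun j => y g - x g j * x' g j)).prod :=
  Commute.list_prod_right _ _ fun _ hw => by
    obtain ⟨j, -, rfl⟩ := List.mem_map.mp hw
    exact (commute_x_mul_x'_y k).sub_right <|
      (ExteriorAlgebra.commute_ι_mul_ι _ _ _).mul_right (ExteriorAlgebra.commute_ι_mul_ι _ _ _)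

theorem macRel_nil_nil (K : List (Fin g)) (q : ℕ) :
    macRel g [] [] K q = (K.map (fun j => y g - x g j * x' g j)).prod * y g ^ q := by
  simp [macRel]

theorem macRel_nil_nil_append_singleton (K : List (Fin g)) (k : Fin g) (q : ℕ) :
    macRel g [] [] (K ++ [k]) q =
      (K.map (fun j => y g - x g j * x' g j)).prod * (y g - x g k * x' g k) * y g ^ q := by
  simp [macRel, mul_assoc]

theorem macRel_nil_nil_add_two_eq (K : List (Fin g)) (k : Fin g) (r : ℕ) :
    macRel g [] [] K (r + 2) =
      macRel g [] [] (K ++ [k]) r * y g + x g k * x' g k * macRel g [] [] (K ++ [k]) r := by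
  rw [macRel_nil_nil, macRel_nil_nil_append_singleton,
    mul_pow_add_two_eq_of_mul_self_eq_zero (commute_x_mul_x'_prod_map_y_sub k K)
      (ExteriorAlgebra.ι_mul_ι_mul_self _ _)]

end Macdonald

theorem macRel_c_only_mem_span_general (g : ℕ) (hg : 1 ≤ g)
    (K : List (Fin g)) (q : ℕ) (hq : 2 ≤ q) (hnd : K.Nodup) (hc : K.length ≤ g - 1) :
    macRel g [] [] K q ∈ TwoSidedIdeal.span {z : E g |
      ∃ K' : List (Fin g), K'.Nodup ∧ K'.length = K.length + 1 ∧
        z = macRel g [] [] K' (q - 2)} := by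
  have hlt : K.length < g := by omega
  obtain ⟨k, hk⟩ : ∃ k, k ∉ K :=
    Cardinal.exists_notMem_of_length_lt K (by rw [Cardinal.mk_fin]; exact_mod_cast hlt)
  obtain ⟨r, rfl⟩ : ∃ r, q = r + 2 := ⟨q - 2, by omega⟩
  rw [macRel_nil_nil_add_two_eq K k r, Nat.add_sub_cancel]
  have hnd' : (K ++ [k]).Nodup := List.concat_eq_append ▸ hnd.concat hk
  refine add_mem (TwoSidedIdeal.mul_mem_right _ _ _ ?_) (TwoSidedIdeal.mul_mem_left _ _ _ ?_) <;>
    exact TwoSidedIdeal.subset_span ⟨K ++ [k], hnd', by simp, rfl⟩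

/-- A Macdonald relation `(y − x_{k₁}x'_{k₁})⋯(y − x_{k_c̃}x'_{k_c̃})·y^{q̃}` of weight `n+1`
with `q̃ ≥ 2`, `a = b = 0` and `0 ≤ c̃ ≤ g − 1` lies in the ideal generated by the Macdonald
relations of weight `n+1` with `a = b = 0`, `c = c̃ + 1` and exponent of `y` equal to `q̃ − 2`. -/
theorem macRel_c_only_mem_span (g n : ℕ) (hg : 1 ≤ g) (hn : 2 ≤ n)
    (K : List (Fin g)) (q : ℕ) (hq : 2 ≤ q) (hnd : K.Nodup) (hc : K.length ≤ g - 1)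
    (hw : 2 * K.length + q = n + 1) :
    macRel g [] [] K q ∈ TwoSidedIdeal.span {z : E g |
      ∃ K' : List (Fin g), K'.Nodup ∧ K'.length = K.length + 1 ∧
        z = macRel g [] [] K' (q - 2)} :=
  macRel_c_only_mem_span_general g hg K q hq hnd hc
end
end

section
/- For each integer k ≥ 1 let R_k denote the commutative ring ℤ[u, v]/(u² − 2k·v, u·v, v²). Then: (1) for integers k, l ≥ 1 with k ≠ l, the rings R_k and R_l are not isomorphic as rings; (2) for all k, l ≥ 1, the ℚ-algebras R_k ⊗_ℤ ℚ and R_l ⊗_ℤ ℚ are isomorphic (both are isomorphic to ℚ[u]/(u³)). -/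
open MvPolynomial

/-- The ring `R_k = ℤ[u, v] / (u² − 2k·v, u·v, v²)`, the integral cohomology ring
(modulo grading) of `S^{2m} ∪_{f_{2k}} D^{4m}` for a map of Hopf invariant `2k`. -/
abbrev Rring (k : ℕ) : Type :=
  MvPolynomial (Fin 2) ℤ ⧸ (Ideal.span
    {(X 0 : MvPolynomial (Fin 2) ℤ) ^ 2 - C (2 * (k : ℤ)) * X 1, X 0 * X 1, (X 1) ^ 2} :
      Ideal (MvPolynomial (Fin 2) ℤ))

/-!
Every nilpotent element of `R_k` is `b u + c v`, whose square `2k b² v` is divisible by `2k`;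
this property survives ring isomorphisms. In `R_l`, however, `u² = 2l v` is divisible by `2k`
only if `k ∣ l`, so `R_k ≅ R_l` forces `k ∣ l` and `l ∣ k`. Over `ℚ` the relation `u² = 2k v`
just says `v = u² / 2k`, so `ℚ ⊗ R_k ≅ ℚ[t]/(t³)` with `u ↦ t`, for every `k ≠ 0`.
-/

namespace Rring

variable {k l : ℕ}

noncomputable def u (k : ℕ) : Rring k := Ideal.Quotient.mk _ (X 0)

noncomputable def v (k : ℕ) : Rring k := Ideal.Quotient.mk _ (X 1)

theorem mk_C (n : ℤ) : (Ideal.Quotient.mk _ (C n) : Rring k) = n :=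
  eq_intCast ((Ideal.Quotient.mk _ : MvPolynomial (Fin 2) ℤ →+* Rring k).comp C) n

theorem u_sq : u k ^ 2 = 2 * k * v k := by
  have h : (Ideal.Quotient.mk _ (X 0 ^ 2 - C (2 * (k : ℤ)) * X 1) : Rring k) = 0 :=
    Ideal.Quotient.eq_zero_iff_mem.mpr (Ideal.subset_span (by simp))
  rw [map_sub, (Ideal.Quotient.mk _).map_mul, mk_C, map_pow, sub_eq_zero] at h
  exact_mod_cast h

theorem u_mul_v : u k * v k = 0 := by
  rw [u, v, ← map_mul, Ideal.Quotient.eq_zero_iff_mem]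
  exact Ideal.subset_span (by simp)

theorem v_sq : v k ^ 2 = 0 := by
  rw [v, ← map_pow, Ideal.Quotient.eq_zero_iff_mem]
  exact Ideal.subset_span (by simp)

theorem u_pow_three : u k ^ 3 = 0 := by
  linear_combination u k * u_sq + 2 * (k : Rring k) * u_mul_v

theorem isNilpotent_u : IsNilpotent (u k) :=
  ⟨3, u_pow_three⟩

theorem exists_eq_add_mul_u_add_mul_v (x : Rring k) :
    ∃ a b c : ℤ, x = a + b * u k + c * v k := by
  obtain ⟨p, rfl⟩ := Ideal.Quotient.mk_surjective x
  induction p using MvPolynomial.induction_on with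
  | C n => exact ⟨n, 0, 0, by simp⟩
  | add p q hp hq =>
    obtain ⟨a, b, c, hp⟩ := hp
    obtain ⟨a', b', c', hq⟩ := hq
    exact ⟨a + a', b + b', c + c', by push_cast [map_add]; linear_combination hp + hq⟩
  | mul_X p i hp =>
    obtain ⟨a, b, c, hp⟩ := hp
    rw [map_mul]
    fin_cases i
    · refine ⟨0, a, 2 * k * b, ?_⟩
      change _ * u k = _
      push_cast
      linear_combination u k * hp + b * u_sq + c * u_mul_v
    · refine ⟨0, 0, a, ?_⟩
      change _ * v k = _
      push_cast
      linear_combination v k * hp + b * u_mul_v + c * v_sq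

section lift

variable {S : Type*} [CommRing S] (x y : S)

noncomputable def lift (hx : x ^ 2 = 2 * k * y) (hxy : x * y = 0) (hy : y ^ 2 = 0) :
    Rring k →+* S :=
  Ideal.Quotient.lift _ (eval₂Hom (Int.castRingHom S) ![x, y]) fun p hp => by
    refine RingHom.mem_ker.mp <|
      (Ideal.span_le (I := RingHom.ker (eval₂Hom (Int.castRingHom S) ![x, y]))).mpr ?_ hp
    rintro p (rfl | rfl | rfl) <;> simp [hx, hxy, hy]

variable {x y} (hx : x ^ 2 = 2 * k * y) (hxy : x * y = 0) (hy : y ^ 2 = 0)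

@[simp] theorem lift_u : lift x y hx hxy hy (u k) = x := by
  simp [lift, u]

@[simp] theorem lift_v : lift x y hx hxy hy (v k) = y := by
  simp [lift, v]

end lift

theorem algHom_ext {S : Type*} [Semiring S] [Algebra ℤ S] {f g : Rring k →ₐ[ℤ] S}
    (hu : f (u k) = g (u k)) (hv : f (v k) = g (v k)) : f = g := by
  refine Ideal.Quotient.algHom_ext _ (MvPolynomial.algHom_ext fun i => ?_)
  fin_cases i
  exacts [hu, hv]

noncomputable def augmentation (k : ℕ) : Rring k →+* ℤ :=
  lift (k := k) 0 0 (by simp) (by simp) (by simp)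

theorem two_mul_dvd_sq_of_isNilpotent {x : Rring k} (hx : IsNilpotent x) :
    (2 * k : Rring k) ∣ x ^ 2 := by
  obtain ⟨a, b, c, rfl⟩ := exists_eq_add_mul_u_add_mul_v x
  obtain rfl : a = 0 := by simpa [augmentation] using (hx.map (augmentation k)).eq_zero
  refine ⟨(b : Rring k) ^ 2 * v k, ?_⟩
  push_cast
  linear_combination (b : Rring k) ^ 2 * u_sq + 2 * (b : Rring k) * (c : Rring k) * u_mul_v +
    (c : Rring k) ^ 2 * v_sq

theorem dvd_of_two_mul_dvd_u_sq (h : (2 * k : Rring l) ∣ u l ^ 2) : k ∣ l := by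
  -- `u ↦ ε + lδ`, `v ↦ εδ` into `ℤ[ε, δ]/(ε², δ²)` keeps the coefficient `2l` of `u²` visible.
  let ε : DualNumber (DualNumber ℤ) := DualNumber.eps
  let δ : DualNumber (DualNumber ℤ) := TrivSqZeroExt.inl DualNumber.eps
  have hε : ε * ε = 0 := DualNumber.eps_mul_eps
  have hδ : δ * δ = 0 := by simp [δ, ← TrivSqZeroExt.inl_mul]
  let ψ : Rring l →+* DualNumber (DualNumber ℤ) :=
    lift (ε + l * δ) (ε * δ) (by linear_combination hε + (l : DualNumber (DualNumber ℤ)) ^ 2 * hδ)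
      (by linear_combination δ * hε + l * ε * hδ) (by linear_combination δ * δ * hε)
  obtain ⟨z, hz⟩ := h
  have hψ : ((2 * l : ℕ) : DualNumber (DualNumber ℤ)) * (ε * δ) = (2 * k : ℕ) * ψ z := by
    have := congrArg ψ hz
    simp only [map_pow, map_mul, map_ofNat, map_natCast, ψ, lift_u] at this
    push_cast
    linear_combination this - hε - (l : DualNumber (DualNumber ℤ)) ^ 2 * hδ
  have hcoeff := congrArg (fun w => w.snd.snd) hψ
  simp only [ε, δ, DualNumber.snd_mul, TrivSqZeroExt.fst_mul, TrivSqZeroExt.fst_natCast,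
    TrivSqZeroExt.snd_natCast, TrivSqZeroExt.fst_inl, TrivSqZeroExt.snd_inl, DualNumber.fst_eps,
    DualNumber.snd_eps, zero_add, mul_one, zero_mul, mul_zero, one_mul, add_zero] at hcoeff
  have h2k : 2 * k ∣ 2 * l := Int.natCast_dvd_natCast.mp ⟨_, hcoeff⟩
  exact Nat.dvd_of_mul_dvd_mul_left two_pos h2k

theorem two_mul_dvd_u_sq_of_ringEquiv (e : Rring k ≃+* Rring l) : (2 * k : Rring l) ∣ u l ^ 2 := by
  simpa [map_ofNat e 2] using map_dvd e (two_mul_dvd_sq_of_isNilpotent (isNilpotent_u.map e.symm))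

theorem eq_of_ringEquiv (e : Rring k ≃+* Rring l) : k = l :=
  Nat.dvd_antisymm (dvd_of_two_mul_dvd_u_sq (two_mul_dvd_u_sq_of_ringEquiv e))
    (dvd_of_two_mul_dvd_u_sq (two_mul_dvd_u_sq_of_ringEquiv e.symm))

end Rring

open TensorProduct

abbrev RatPolyModCube : Type := Polynomial ℚ ⧸ Ideal.span {(Polynomial.X : Polynomial ℚ) ^ 3}

namespace RatPolyModCube

noncomputable def t : RatPolyModCube := Ideal.Quotient.mk _ Polynomial.X

theorem t_pow_three : t ^ 3 = 0 :=
  Ideal.Quotient.eq_zero_iff_mem.mpr (Ideal.mem_span_singleton_self _)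

section lift

variable {A : Type*} [CommRing A] [Algebra ℚ A] (a : A) (ha : a ^ 3 = 0)

noncomputable def liftOfPowThree : RatPolyModCube →ₐ[ℚ] A :=
  Ideal.Quotient.liftₐ _ (Polynomial.aeval a) fun p hp => by
    obtain ⟨q, rfl⟩ := Ideal.mem_span_singleton'.mp hp
    simp [ha]

@[simp] theorem liftOfPowThree_t : liftOfPowThree a ha t = a := by
  rw [liftOfPowThree, t, ← Ideal.Quotient.mkₐ_eq_mk ℚ, ← AlgHom.comp_apply,
    Ideal.Quotient.liftₐ_comp, Polynomial.aeval_X]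

end lift

theorem algHom_ext {A : Type*} [Semiring A] [Algebra ℚ A] {f g : RatPolyModCube →ₐ[ℚ] A}
    (h : f t = g t) : f = g :=
  Ideal.Quotient.algHom_ext _ (Polynomial.algHom_ext h)

end RatPolyModCube

namespace Rring

open RatPolyModCube

variable {k : ℕ}

theorem two_mul_natCast_mul_algebraMap_inv {A : Type*} [Semiring A] [Algebra ℚ A] (hk : k ≠ 0) :
    (2 * k : A) * algebraMap ℚ A (2 * k)⁻¹ = 1 := by
  rw [← map_ofNat (algebraMap ℚ A), ← map_natCast (algebraMap ℚ A), ← map_mul, ← map_mul,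
    mul_inv_cancel₀ (by positivity), map_one]

noncomputable def toRatPolyModCube (hk : k ≠ 0) : Rring k →+* RatPolyModCube :=
  lift t (algebraMap ℚ _ (2 * k)⁻¹ * t ^ 2)
    (by rw [← mul_assoc, two_mul_natCast_mul_algebraMap_inv hk, one_mul])
    (by linear_combination algebraMap ℚ _ (2 * k)⁻¹ * t_pow_three)
    (by linear_combination (algebraMap ℚ _ (2 * k)⁻¹) ^ 2 * t * t_pow_three)

@[simp] theorem toRatPolyModCube_u (hk : k ≠ 0) : toRatPolyModCube hk (u k) = t :=
  lift_u ..

@[simp] theorem toRatPolyModCube_v (hk : k ≠ 0) :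
    toRatPolyModCube hk (v k) = algebraMap ℚ _ (2 * k)⁻¹ * t ^ 2 :=
  lift_v ..

noncomputable def ratTensorToRatPolyModCube (hk : k ≠ 0) :
    ℚ ⊗[ℤ] Rring k →ₐ[ℚ] RatPolyModCube :=
  Algebra.TensorProduct.lift (Algebra.ofId ℚ _) (toRatPolyModCube hk).toIntAlgHom
    fun _ _ => Commute.all _ _

theorem ratTensorToRatPolyModCube_one_tmul (hk : k ≠ 0) (x : Rring k) :
    ratTensorToRatPolyModCube hk (1 ⊗ₜ x) = toRatPolyModCube hk x :=
  (Algebra.TensorProduct.lift_tmul _ _ _ _ _).trans (one_mul _)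

noncomputable def ratPolyModCubeToRatTensor (k : ℕ) : RatPolyModCube →ₐ[ℚ] ℚ ⊗[ℤ] Rring k :=
  liftOfPowThree ((1 : ℚ) ⊗ₜ[ℤ] u k)
    (by rw [Algebra.TensorProduct.tmul_pow, u_pow_three, tmul_zero])

@[simp] theorem ratPolyModCubeToRatTensor_t : ratPolyModCubeToRatTensor k t = 1 ⊗ₜ u k :=
  liftOfPowThree_t ..

theorem one_tmul_u_mul_self :
    ((1 : ℚ) ⊗ₜ[ℤ] u k) * ((1 : ℚ) ⊗ₜ[ℤ] u k) = (2 * k : ℚ) ⊗ₜ[ℤ] v k := by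
  rw [Algebra.TensorProduct.tmul_mul_tmul, one_mul, ← sq, u_sq]
  have h : (2 * k : Rring k) * v k = (2 * k : ℤ) • v k := by simp
  rw [h, tmul_smul, smul_tmul', zsmul_eq_mul, mul_one]
  push_cast
  rfl

theorem ratTensorToRatPolyModCube_comp (hk : k ≠ 0) :
    (ratTensorToRatPolyModCube hk).comp (ratPolyModCubeToRatTensor k) = AlgHom.id ℚ _ :=
  RatPolyModCube.algHom_ext (by simp [ratTensorToRatPolyModCube_one_tmul])

theorem ratPolyModCubeToRatTensor_comp (hk : k ≠ 0) :
    (ratPolyModCubeToRatTensor k).comp (ratTensorToRatPolyModCube hk) = AlgHom.id ℚ _ := by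
  refine Algebra.TensorProduct.ext (Subsingleton.elim _ _) (Rring.algHom_ext ?_ ?_)
  · simp [ratTensorToRatPolyModCube_one_tmul]
  · simp only [AlgHom.comp_apply, AlgHom.coe_restrictScalars', AlgHom.id_apply,
      Algebra.TensorProduct.includeRight_apply, ratTensorToRatPolyModCube_one_tmul,
      toRatPolyModCube_v, map_mul, AlgHom.commutes]
    rw [sq t, map_mul (ratPolyModCubeToRatTensor k), ratPolyModCubeToRatTensor_t,
      one_tmul_u_mul_self, Algebra.TensorProduct.algebraMap_apply,
      Algebra.TensorProduct.tmul_mul_tmul, one_mul, Algebra.algebraMap_self_apply,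
      inv_mul_cancel₀ (by positivity)]

noncomputable def ratTensorEquiv (hk : k ≠ 0) : ℚ ⊗[ℤ] Rring k ≃ₐ[ℚ] RatPolyModCube :=
  AlgEquiv.ofAlgHom (ratTensorToRatPolyModCube hk) (ratPolyModCubeToRatTensor k)
    (ratTensorToRatPolyModCube_comp hk) (ratPolyModCubeToRatTensor_comp hk)

end Rring

/-- For `k ≠ l`, the rings `R_k` and `R_l` are not isomorphic, while the rationalizations
`R_k ⊗ ℚ` and `R_l ⊗ ℚ` are always isomorphic as `ℚ`-algebras (both being isomorphic to
`ℚ[u]/(u³)`). -/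
theorem Rring_not_iso_but_rat_iso (k l : ℕ) (hk : 1 ≤ k) (hl : 1 ≤ l) :
    (k ≠ l → ¬ Nonempty (Rring k ≃+* Rring l)) ∧
    Nonempty ((TensorProduct ℤ ℚ (Rring k)) ≃ₐ[ℚ] (TensorProduct ℤ ℚ (Rring l))) ∧
    Nonempty ((TensorProduct ℤ ℚ (Rring k)) ≃ₐ[ℚ]
      (Polynomial ℚ ⧸ Ideal.span {(Polynomial.X : Polynomial ℚ) ^ 3})) := by
  have hk₀ : k ≠ 0 := Nat.one_le_iff_ne_zero.mp hk
  have hl₀ : l ≠ 0 := Nat.one_le_iff_ne_zero.mp hl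
  exact ⟨fun hne ⟨e⟩ => hne (Rring.eq_of_ringEquiv e),
    ⟨(Rring.ratTensorEquiv hk₀).trans (Rring.ratTensorEquiv hl₀).symm⟩,
    ⟨Rring.ratTensorEquiv hk₀⟩⟩
end
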